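/- arXiv:1011.0070 — 13 statements merged into one kernel-verified Lean document; each statement's English description precedes it below -/
import Mathlib

section
/- The lattice equation with polynomial E(w,x,y,z) = (x+1)(w-1) - (z-1)(y+1), i.e. (u_{n+1,m}+1)(u_{n,m}-1) = (u_{n+1,m+1}-1)(u_{n,m+1}+1), admits the five-point generalized symmetry with generator g_{n,m} = (u_{n,m}^2 - 1)(u_{n+1,m} - u_{n-1,m}) (the modified Volterra equation): for every solution u : ℤ × ℤ → ℝ of the equation and every (n,m) ∈ ℤ², the linearized equation g_{n,m}·∂₁E + g_{n+1,m}·∂₂E + g_{n,m+1}·∂₃E + g_{n+1,m+1}·∂₄E = 0 holds, where each ∂ᵢE is evaluated at (u_{n,m}, u_{n+1,m}, u_{n,m+1}, u_{n+1,m+1}). -/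
theorem stmt_0
    (E : ℝ → ℝ → ℝ → ℝ → ℝ)
    (hE : ∀ w x y z : ℝ, E w x y z = (x + 1) * (w - 1) - (z - 1) * (y + 1))
    (u : ℤ × ℤ → ℝ)
    (hu : ∀ n m : ℤ, E (u (n, m)) (u (n + 1, m)) (u (n, m + 1)) (u (n + 1, m + 1)) = 0)
    (g : ℤ × ℤ → ℝ)
    (hg : ∀ n m : ℤ, g (n, m) = (u (n, m) ^ 2 - 1) * (u (n + 1, m) - u (n - 1, m)))
    (n m : ℤ) :
    g (n, m) * deriv (fun w => E w (u (n + 1, m)) (u (n, m + 1)) (u (n + 1, m + 1))) (u (n, m))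
      + g (n + 1, m) * deriv (fun x => E (u (n, m)) x (u (n, m + 1)) (u (n + 1, m + 1))) (u (n + 1, m))
      + g (n, m + 1) * deriv (fun y => E (u (n, m)) (u (n + 1, m)) y (u (n + 1, m + 1))) (u (n, m + 1))
      + g (n + 1, m + 1) * deriv (fun z => E (u (n, m)) (u (n + 1, m)) (u (n, m + 1)) z) (u (n + 1, m + 1)) = 0 := by
  have d1 : deriv (fun w => E w (u (n + 1, m)) (u (n, m + 1)) (u (n + 1, m + 1))) (u (n, m))
      = u (n + 1, m) + 1 := by
    have h : (fun w => E w (u (n + 1, m)) (u (n, m + 1)) (u (n + 1, m + 1)))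
        = fun w => (u (n + 1, m) + 1) * (w - 1) - (u (n + 1, m + 1) - 1) * (u (n, m + 1) + 1) :=
      funext fun w => hE _ _ _ _
    rw [h]
    have := (((hasDerivAt_id (u (n, m))).sub_const 1).const_mul (u (n + 1, m) + 1)).sub_const
      ((u (n + 1, m + 1) - 1) * (u (n, m + 1) + 1))
    simpa using this.deriv
  have d2 : deriv (fun x => E (u (n, m)) x (u (n, m + 1)) (u (n + 1, m + 1))) (u (n + 1, m))
      = u (n, m) - 1 := by
    have h : (fun x => E (u (n, m)) x (u (n, m + 1)) (u (n + 1, m + 1)))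
        = fun x => (x + 1) * (u (n, m) - 1) - (u (n + 1, m + 1) - 1) * (u (n, m + 1) + 1) :=
      funext fun x => hE _ _ _ _
    rw [h]
    have := ((((hasDerivAt_id (u (n + 1, m))).add_const 1).mul_const (u (n, m) - 1))).sub_const
      ((u (n + 1, m + 1) - 1) * (u (n, m + 1) + 1))
    simpa using this.deriv
  have d3 : deriv (fun y => E (u (n, m)) (u (n + 1, m)) y (u (n + 1, m + 1))) (u (n, m + 1))
      = -(u (n + 1, m + 1) - 1) := by
    have h : (fun y => E (u (n, m)) (u (n + 1, m)) y (u (n + 1, m + 1)))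
        = fun y => (u (n + 1, m) + 1) * (u (n, m) - 1) - (u (n + 1, m + 1) - 1) * (y + 1) :=
      funext fun y => hE _ _ _ _
    rw [h]
    have := (((hasDerivAt_id (u (n, m + 1))).add_const 1).const_mul
      (u (n + 1, m + 1) - 1)).const_sub ((u (n + 1, m) + 1) * (u (n, m) - 1))
    simpa using this.deriv
  have d4 : deriv (fun z => E (u (n, m)) (u (n + 1, m)) (u (n, m + 1)) z) (u (n + 1, m + 1))
      = -(u (n, m + 1) + 1) := by
    have h : (fun z => E (u (n, m)) (u (n + 1, m)) (u (n, m + 1)) z)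
        = fun z => (u (n + 1, m) + 1) * (u (n, m) - 1) - (z - 1) * (u (n, m + 1) + 1) :=
      funext fun z => hE _ _ _ _
    rw [h]
    have := ((((hasDerivAt_id (u (n + 1, m + 1))).sub_const 1).mul_const
      (u (n, m + 1) + 1))).const_sub ((u (n + 1, m) + 1) * (u (n, m) - 1))
    simpa using this.deriv
  have e0 : (u (n + 1, m) + 1) * (u (n, m) - 1)
      - (u (n + 1, m + 1) - 1) * (u (n, m + 1) + 1) = 0 := by
    have := hu n m; rwa [hE] at this
  have em : (u (n, m) + 1) * (u (n - 1, m) - 1)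
      - (u (n, m + 1) - 1) * (u (n - 1, m + 1) + 1) = 0 := by
    have := hu (n - 1) m
    rw [hE] at this
    simpa using this
  have ep : (u (n + 2, m) + 1) * (u (n + 1, m) - 1)
      - (u (n + 2, m + 1) - 1) * (u (n + 1, m + 1) + 1) = 0 := by
    have := hu (n + 1) m
    rw [hE] at this
    have h1 : (n + 1 + 1 : ℤ) = n + 2 := by ring
    rwa [h1] at this
  have g1 := hg n m
  have g2 := hg (n + 1) m
  have g3 := hg n (m + 1)
  have g4 := hg (n + 1) (m + 1)
  have h1 : (n + 1 + 1 : ℤ) = n + 2 := by ring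
  have h2 : (n + 1 - 1 : ℤ) = n := by ring
  rw [h1, h2] at g2 g4
  rw [d1, d2, d3, d4, g1, g2, g3, g4]
  linear_combination
    ((u (n, m) + 1) * (u (n + 1, m) - u (n - 1, m))
      + (u (n + 1, m) - 1) * (u (n + 2, m) - u (n, m))
) * e0
    + (u (n + 1, m + 1) - 1) * (u (n, m + 1) + 1) * (ep - em)
end

section
/- The lattice equation with polynomial E(w,x,y,z) = (x+1)(w-1) - (z-1)(y+1), i.e. (u_{n+1,m}+1)(u_{n,m}-1) = (u_{n+1,m+1}-1)(u_{n,m+1}+1), admits the five-point generalized symmetry with generator g_{n,m} = (u_{n,m}^2 - 1)·(1/(u_{n,m+1}+u_{n,m}) - 1/(u_{n,m}+u_{n,m-1})): for every solution u : ℤ × ℤ → ℝ of the equation satisfying the nondegeneracy condition u_{n,m} + u_{n,m+1} ≠ 0 for all (n,m), and every (n,m) ∈ ℤ², the linearized equation g_{n,m}·∂₁E + g_{n+1,m}·∂₂E + g_{n,m+1}·∂₃E + g_{n+1,m+1}·∂₄E = 0 holds, where each ∂ᵢE is evaluated at (u_{n,m}, u_{n+1,m}, u_{n,m+1}, u_{n+1,m+1}).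 -/
set_option maxRecDepth 8000
set_option maxHeartbeats 2000000

theorem stmt_1
    (E : ℝ → ℝ → ℝ → ℝ → ℝ)
    (hE : ∀ w x y z : ℝ, E w x y z = (x + 1) * (w - 1) - (z - 1) * (y + 1))
    (u : ℤ × ℤ → ℝ)
    (hu : ∀ n m : ℤ, E (u (n, m)) (u (n + 1, m)) (u (n, m + 1)) (u (n + 1, m + 1)) = 0)
    (hnd : ∀ n m : ℤ, u (n, m) + u (n, m + 1) ≠ 0)
    (g : ℤ × ℤ → ℝ)
    (hg : ∀ n m : ℤ, g (n, m) = (u (n, m) ^ 2 - 1) * (1 / (u (n, m + 1) + u (n, m)) - 1 / (u (n, m) + u (n, m - 1))))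
    (n m : ℤ) :
    g (n, m) * deriv (fun w => E w (u (n + 1, m)) (u (n, m + 1)) (u (n + 1, m + 1))) (u (n, m))
      + g (n + 1, m) * deriv (fun x => E (u (n, m)) x (u (n, m + 1)) (u (n + 1, m + 1))) (u (n + 1, m))
      + g (n, m + 1) * deriv (fun y => E (u (n, m)) (u (n + 1, m)) y (u (n + 1, m + 1))) (u (n, m + 1))
      + g (n + 1, m + 1) * deriv (fun z => E (u (n, m)) (u (n + 1, m)) (u (n, m + 1)) z) (u (n + 1, m + 1)) = 0 := by
  set a := u (n, m) with ha
  set b := u (n + 1, m) with hb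
  set c := u (n, m + 1) with hc
  set d := u (n + 1, m + 1) with hd
  set p := u (n, m - 1) with hp
  set q := u (n + 1, m - 1) with hq
  set r := u (n, m + 1 + 1) with hr
  set s := u (n + 1, m + 1 + 1) with hs
  -- derivative computations
  have d1 : deriv (fun w => E w b c d) a = b + 1 := by
    simp only [hE]
    have : HasDerivAt (fun w : ℝ => (b + 1) * (w - 1) - (d - 1) * (c + 1)) ((b + 1) * 1) a :=
      (((hasDerivAt_id a).sub_const 1).const_mul (b + 1)).sub_const _
    simpa using this.deriv
  have d2 : deriv (fun x => E a x c d) b = a - 1 := by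
    simp only [hE]
    have : HasDerivAt (fun x : ℝ => (x + 1) * (a - 1) - (d - 1) * (c + 1)) (1 * (a - 1)) b :=
      (((hasDerivAt_id b).add_const 1).mul_const (a - 1)).sub_const _
    simpa using this.deriv
  have d3 : deriv (fun y => E a b y d) c = -(d - 1) := by
    simp only [hE]
    have : HasDerivAt (fun y : ℝ => (b + 1) * (a - 1) - (d - 1) * (y + 1)) (0 - (d - 1) * 1) c :=
      (hasDerivAt_const c _).sub (((hasDerivAt_id c).add_const 1).const_mul (d - 1))
    simpa using this.deriv
  have d4 : deriv (fun z => E a b c z) d = -(c + 1) := by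
    simp only [hE]
    have : HasDerivAt (fun z : ℝ => (b + 1) * (a - 1) - (z - 1) * (c + 1)) (0 - 1 * (c + 1)) d :=
      (hasDerivAt_const d _).sub (((hasDerivAt_id d).sub_const 1).mul_const (c + 1))
    simpa using this.deriv
  -- quad equations
  have e0 : (b + 1) * (a - 1) - (d - 1) * (c + 1) = 0 := by
    have := hu n m; rw [hE] at this
    simpa [← ha, ← hb, ← hc, ← hd] using this
  have em : (q + 1) * (p - 1) - (b - 1) * (a + 1) = 0 := by
    have := hu n (m - 1); rw [hE] at this
    simpa [← ha, ← hb, ← hp, ← hq, sub_add_cancel] using this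
  have ep : (d + 1) * (c - 1) - (s - 1) * (r + 1) = 0 := by
    have := hu n (m + 1); rw [hE] at this
    simpa [← hc, ← hd, ← hr, ← hs] using this
  -- nondegeneracy
  have n1 : c + a ≠ 0 := by have := hnd n m; rw [← ha, ← hc] at this; intro h; exact this (by linarith)
  have n2 : a + p ≠ 0 := by
    have := hnd n (m - 1)
    rw [← hp] at this
    rw [show (n, m - 1 + 1) = (n, m) by ring_nf] at this
    rw [← ha] at this; intro h; exact this (by linarith)
  have n3 : d + b ≠ 0 := by have := hnd (n + 1) m; rw [← hb, ← hd] at this; intro h; exact this (by linarith)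
  have n4 : b + q ≠ 0 := by
    have := hnd (n + 1) (m - 1)
    rw [← hq] at this
    rw [show (n + 1, m - 1 + 1) = (n + 1, m) by ring_nf] at this
    rw [← hb] at this; intro h; exact this (by linarith)
  have n5 : r + c ≠ 0 := by have := hnd n (m + 1); rw [← hc, ← hr] at this; intro h; exact this (by linarith)
  have n6 : s + d ≠ 0 := by have := hnd (n + 1) (m + 1); rw [← hd, ← hs] at this; intro h; exact this (by linarith)
  -- generator values
  have g00 : g (n, m) = (a ^ 2 - 1) * (1 / (c + a) - 1 / (a + p)) := by
    rw [hg n m, ← ha, ← hc, ← hp]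
  have g10 : g (n + 1, m) = (b ^ 2 - 1) * (1 / (d + b) - 1 / (b + q)) := by
    rw [hg (n + 1) m, ← hb, ← hd, ← hq]
  have g01 : g (n, m + 1) = (c ^ 2 - 1) * (1 / (r + c) - 1 / (c + a)) := by
    rw [hg n (m + 1), ← hc, ← hr]
    rw [show (n, m + 1 - 1) = (n, m) by ring_nf, ← ha]
  have g11 : g (n + 1, m + 1) = (d ^ 2 - 1) * (1 / (s + d) - 1 / (d + b)) := by
    rw [hg (n + 1) (m + 1), ← hd, ← hs]
    rw [show (n + 1, m + 1 - 1) = (n + 1, m) by ring_nf, ← hb]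
  have hv1 : (c + a) * (1 / (c + a)) = 1 := mul_one_div_cancel n1
  have hv2 : (a + p) * (1 / (a + p)) = 1 := mul_one_div_cancel n2
  have hv3 : (d + b) * (1 / (d + b)) = 1 := mul_one_div_cancel n3
  have hv4 : (b + q) * (1 / (b + q)) = 1 := mul_one_div_cancel n4
  have hv5 : (r + c) * (1 / (r + c)) = 1 := mul_one_div_cancel n5
  have hv6 : (s + d) * (1 / (s + d)) = 1 := mul_one_div_cancel n6
  rw [d1, d2, d3, d4, g00, g10, g01, g11]
  linear_combination
    (-1 + (a + 1) * (1 / (c + a)) + (b - 1) * (1 / (d + b))) * e0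
    + (d - 1) * (c + 1) * hv1 + (d - 1) * (c + 1) * hv3
    - (a - 1) * (b + 1) * ((b + q) * (1 / (b + q)) - (b - 1) * (1 / (b + q))) * hv2
    - (a - 1) * (b + 1) * (1 - (a + 1) * (1 / (a + p))) * hv4
    + (a - 1) * (b + 1) * (1 / (a + p)) * (1 / (b + q)) * em
    - (c + 1) * (d - 1) * ((s + d) * (1 / (s + d)) - (d + 1) * (1 / (s + d))) * hv5
    - (c + 1) * (d - 1) * (1 - (c - 1) * (1 / (r + c))) * hv6
    - (c + 1) * (d - 1) * (1 / (r + c)) * (1 / (s + d)) * ep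
end

section
/- Let c ∈ ℝ with c ≠ -1 and c ≠ 0. The lattice equation with polynomial E(w,x,y,z) = z(y+c)(x-1) - w(x+c)(y-1), i.e. u_{n+1,m+1}(u_{n,m+1}+c)(u_{n+1,m}-1) = u_{n,m}(u_{n+1,m}+c)(u_{n,m+1}-1), admits the five-point generalized symmetry with generator g_{n,m} = u_{n,m}(u_{n,m}-1)·(1/D_{n,m} - 1/D_{n-1,m}), where D_{n,m} = u_{n+1,m}u_{n,m} + c(u_{n+1,m}+u_{n,m}-1): for every solution u : ℤ × ℤ → ℝ of the equation satisfying D_{n,m} ≠ 0 for all (n,m), and every (n,m) ∈ ℤ², the linearized equation g_{n,m}·∂₁E + g_{n+1,m}·∂₂E + g_{n,m+1}·∂₃E + g_{n+1,m+1}·∂₄E = 0 holds, where each ∂ᵢE is evaluated at (u_{n,m}, u_{n+1,m}, u_{n,m+1}, u_{n+1,m+1}). -/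
/-!
With `D(p, q) = q p + c (q + p - 1)` the quad polynomial factors through `D` in two ways:
`E(w,x,y,z) = (x - 1) D(y,z) - (y - 1) D(w,x)` and
`(z + c) E(w,x,y,z) = (c + 1) z D(w,x) - (w (x + c) - z (x - 1)) D(y,z)`.
On a solution these identities rewrite the generator on row `m + 1` in terms of row `m` alone.
After this substitution the linearized equation at `(n, m)` is `E(u_{n,m}, …, u_{n+1,m+1})`
times an explicit rational function, so it vanishes.
-/

def quadE (c w x y z : ℝ) : ℝ := z * (y + c) * (x - 1) - w * (x + c) * (y - 1)

def edgeD (c p q : ℝ) : ℝ := q * p + c * (q + p - 1)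

noncomputable def symGenerator (c l v r : ℝ) : ℝ :=
  v * (v - 1) * (1 / edgeD c v r - 1 / edgeD c l v)

theorem quadE_eq_sub_mul_edgeD (c w x y z : ℝ) :
    quadE c w x y z = (x - 1) * edgeD c y z - (y - 1) * edgeD c w x := by
  unfold quadE edgeD; ring

theorem add_mul_quadE (c w x y z : ℝ) :
    (z + c) * quadE c w x y z
      = (c + 1) * z * edgeD c w x - (w * (x + c) - z * (x - 1)) * edgeD c y z := by
  unfold quadE edgeD; ring

section Derivatives

variable {c w x y z : ℝ} (t : ℝ)

theorem deriv_quadE_fst : deriv (fun w => quadE c w x y z) t = -((x + c) * (y - 1)) := by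
  simp [quadE]

theorem deriv_quadE_snd : deriv (fun x => quadE c w x y z) t = z * (y + c) - w * (y - 1) := by
  have h : (fun x => quadE c w x y z)
      = fun x => (z * (y + c) - w * (y - 1)) * x + (-(z * (y + c)) - w * c * (y - 1)) := by
    funext x; unfold quadE; ring
  rw [h]; simp

theorem deriv_quadE_thd : deriv (fun y => quadE c w x y z) t = z * (x - 1) - w * (x + c) := by
  have h : (fun y => quadE c w x y z)
      = fun y => (z * (x - 1) - w * (x + c)) * y + (z * c * (x - 1) + w * (x + c)) := by
    funext y; unfold quadE; ring
  rw [h]; simp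

theorem deriv_quadE_fth : deriv (fun z => quadE c w x y z) t = (y + c) * (x - 1) := by
  simp [quadE]

end Derivatives

section Solutions

variable {c w x y z : ℝ}

theorem sub_one_div_edgeD_of_quadE_eq_zero (h : quadE c w x y z = 0)
    (hwx : edgeD c w x ≠ 0) (hyz : edgeD c y z ≠ 0) :
    (y - 1) / edgeD c y z = (x - 1) / edgeD c w x := by
  rw [div_eq_div_iff hyz hwx]
  linear_combination quadE_eq_sub_mul_edgeD c w x y z - h

theorem div_edgeD_of_quadE_eq_zero (hc : c + 1 ≠ 0) (h : quadE c w x y z = 0)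
    (hwx : edgeD c w x ≠ 0) (hyz : edgeD c y z ≠ 0) :
    z / edgeD c y z = (w * (x + c) - z * (x - 1)) / ((c + 1) * edgeD c w x) := by
  rw [div_eq_div_iff hyz (mul_ne_zero hc hwx)]
  linear_combination (z + c) * h - add_mul_quadE c w x y z

theorem symGenerator_eq_of_quadE_eq_zero {a b d A B C : ℝ} (hc : c + 1 ≠ 0)
    (hL : quadE c a b A B = 0) (hM : quadE c b d B C = 0)
    (hab : edgeD c a b ≠ 0) (hbd : edgeD c b d ≠ 0)
    (hAB : edgeD c A B ≠ 0) (hBC : edgeD c B C ≠ 0) :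
    symGenerator c A B C
      = B * (d - 1) / edgeD c b d
        - (B - 1) * (a * (b + c) - B * (b - 1)) / ((c + 1) * edgeD c a b) := by
  calc symGenerator c A B C = B * ((B - 1) / edgeD c B C) - (B - 1) * (B / edgeD c A B) := by
        unfold symGenerator; ring
    _ = _ := by
        rw [sub_one_div_edgeD_of_quadE_eq_zero hM hbd hBC, div_edgeD_of_quadE_eq_zero hc hL hab hAB]
        ring

theorem linearization_eq_mul_quadE {a b d e B C : ℝ} (hc : c + 1 ≠ 0)
    (hab : edgeD c a b ≠ 0) (hbd : edgeD c b d ≠ 0) (hde : edgeD c d e ≠ 0) :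
    symGenerator c a b d * -((d + c) * (B - 1))
      + symGenerator c b d e * (C * (B + c) - b * (B - 1))
      + (B * (d - 1) / edgeD c b d
          - (B - 1) * (a * (b + c) - B * (b - 1)) / ((c + 1) * edgeD c a b))
        * (C * (d - 1) - b * (d + c))
      + (C * (e - 1) / edgeD c d e
          - (C - 1) * (b * (d + c) - C * (d - 1)) / ((c + 1) * edgeD c b d))
        * ((B + c) * (d - 1))
      = quadE c b d B C * ((B - 1) * (b - 1) / ((c + 1) * edgeD c a b) + (d + e - 1) / edgeD c d e
          + (C * (d - 1) - b * (d + c) - (c + 1) * d) / ((c + 1) * edgeD c b d)) := by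
  unfold symGenerator
  field_simp
  unfold quadE edgeD
  ring

theorem linearization_eq_zero {a b d e A B C F : ℝ} (hc : c + 1 ≠ 0)
    (hL : quadE c a b A B = 0) (hM : quadE c b d B C = 0) (hR : quadE c d e C F = 0)
    (hab : edgeD c a b ≠ 0) (hbd : edgeD c b d ≠ 0) (hde : edgeD c d e ≠ 0)
    (hAB : edgeD c A B ≠ 0) (hBC : edgeD c B C ≠ 0) (hCF : edgeD c C F ≠ 0) :
    symGenerator c a b d * -((d + c) * (B - 1))
      + symGenerator c b d e * (C * (B + c) - b * (B - 1))
      + symGenerator c A B C * (C * (d - 1) - b * (d + c))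
      + symGenerator c B C F * ((B + c) * (d - 1)) = 0 := by
  rw [symGenerator_eq_of_quadE_eq_zero hc hL hM hab hbd hAB hBC,
    symGenerator_eq_of_quadE_eq_zero hc hM hR hbd hde hBC hCF,
    linearization_eq_mul_quadE hc hab hbd hde, hM, zero_mul]

end Solutions

theorem stmt_2_general
    (c : ℝ) (hc1 : c ≠ -1)
    (E : ℝ → ℝ → ℝ → ℝ → ℝ)
    (hE : ∀ w x y z : ℝ, E w x y z = z * (y + c) * (x - 1) - w * (x + c) * (y - 1))
    (u : ℤ × ℤ → ℝ)
    (hu : ∀ n m : ℤ, E (u (n, m)) (u (n + 1, m)) (u (n, m + 1)) (u (n + 1, m + 1)) = 0)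
    (D : ℤ × ℤ → ℝ)
    (hD : ∀ n m : ℤ, D (n, m) = u (n + 1, m) * u (n, m) + c * (u (n + 1, m) + u (n, m) - 1))
    (hDne : ∀ n m : ℤ, D (n, m) ≠ 0)
    (g : ℤ × ℤ → ℝ)
    (hg : ∀ n m : ℤ, g (n, m) = u (n, m) * (u (n, m) - 1) * (1 / D (n, m) - 1 / D (n - 1, m)))
    (n m : ℤ) :
    g (n, m) * deriv (fun w => E w (u (n + 1, m)) (u (n, m + 1)) (u (n + 1, m + 1))) (u (n, m))
      + g (n + 1, m) * deriv (fun x => E (u (n, m)) x (u (n, m + 1)) (u (n + 1, m + 1))) (u (n + 1, m))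
      + g (n, m + 1) * deriv (fun y => E (u (n, m)) (u (n + 1, m)) y (u (n + 1, m + 1))) (u (n, m + 1))
      + g (n + 1, m + 1) * deriv (fun z => E (u (n, m)) (u (n + 1, m)) (u (n, m + 1)) z) (u (n + 1, m + 1)) = 0 := by
  have hc : c + 1 ≠ 0 := fun h => hc1 (by linarith)
  obtain rfl : E = quadE c := by funext w x y z; exact hE w x y z
  have hD' : ∀ n m : ℤ, D (n, m) = edgeD c (u (n, m)) (u (n + 1, m)) := hD
  have hDne' : ∀ n m : ℤ, edgeD c (u (n, m)) (u (n + 1, m)) ≠ 0 :=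
    fun n m => hD' n m ▸ hDne n m
  have hg' : ∀ n m : ℤ, g (n, m) = symGenerator c (u (n - 1, m)) (u (n, m)) (u (n + 1, m)) := by
    intro n m
    rw [hg, hD', hD', sub_add_cancel]
    rfl
  have hL := hu (n - 1) m
  have hab := hDne' (n - 1) m
  have hAB := hDne' (n - 1) (m + 1)
  rw [sub_add_cancel] at hL hab hAB
  rw [deriv_quadE_fst, deriv_quadE_snd, deriv_quadE_thd, deriv_quadE_fth,
    hg' n m, hg' (n + 1) m, hg' n (m + 1), hg' (n + 1) (m + 1), add_sub_cancel_right]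
  exact linearization_eq_zero hc hL (hu n m) (hu (n + 1) m) hab (hDne' n m) (hDne' (n + 1) m)
    hAB (hDne' n (m + 1)) (hDne' (n + 1) (m + 1))

theorem stmt_2
    (c : ℝ) (hc1 : c ≠ -1) (hc0 : c ≠ 0)
    (E : ℝ → ℝ → ℝ → ℝ → ℝ)
    (hE : ∀ w x y z : ℝ, E w x y z = z * (y + c) * (x - 1) - w * (x + c) * (y - 1))
    (u : ℤ × ℤ → ℝ)
    (hu : ∀ n m : ℤ, E (u (n, m)) (u (n + 1, m)) (u (n, m + 1)) (u (n + 1, m + 1)) = 0)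
    (D : ℤ × ℤ → ℝ)
    (hD : ∀ n m : ℤ, D (n, m) = u (n + 1, m) * u (n, m) + c * (u (n + 1, m) + u (n, m) - 1))
    (hDne : ∀ n m : ℤ, D (n, m) ≠ 0)
    (g : ℤ × ℤ → ℝ)
    (hg : ∀ n m : ℤ, g (n, m) = u (n, m) * (u (n, m) - 1) * (1 / D (n, m) - 1 / D (n - 1, m)))
    (n m : ℤ) :
    g (n, m) * deriv (fun w => E w (u (n + 1, m)) (u (n, m + 1)) (u (n + 1, m + 1))) (u (n, m))
      + g (n + 1, m) * deriv (fun x => E (u (n, m)) x (u (n, m + 1)) (u (n + 1, m + 1))) (u (n + 1, m))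
      + g (n, m + 1) * deriv (fun y => E (u (n, m)) (u (n + 1, m)) y (u (n + 1, m + 1))) (u (n, m + 1))
      + g (n + 1, m + 1) * deriv (fun z => E (u (n, m)) (u (n + 1, m)) (u (n, m + 1)) z) (u (n + 1, m + 1)) = 0 :=
  stmt_2_general c hc1 E hE u hu D hD hDne g hg n m
end

section
/- Let c ∈ ℝ with c ≠ -1 and c ≠ 0. The lattice equation with polynomial E(w,x,y,z) = z(y+c)(x-1) - w(x+c)(y-1), i.e. u_{n+1,m+1}(u_{n,m+1}+c)(u_{n+1,m}-1) = u_{n,m}(u_{n+1,m}+c)(u_{n,m+1}-1), admits the five-point generalized symmetry with generator g_{n,m} = u_{n,m}(u_{n,m}+c)·(1/C_{n,m} - 1/C_{n,m-1}), where C_{n,m} = u_{n,m+1}u_{n,m} - (u_{n,m+1}+u_{n,m}+c): for every solution u : ℤ × ℤ → ℝ of the equation satisfying C_{n,m} ≠ 0 for all (n,m), and every (n,m) ∈ ℤ², the linearized equation g_{n,m}·∂₁E + g_{n+1,m}·∂₂E + g_{n,m+1}·∂₃E + g_{n+1,m+1}·∂₄E = 0 holds, where each ∂ᵢE is evaluated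 at (u_{n,m}, u_{n+1,m}, u_{n,m+1}, u_{n+1,m+1}). -/
private theorem daff (p q t : ℝ) : deriv (fun x : ℝ => p * x + q) t = p := by
  have h : HasDerivAt (fun x : ℝ => p * x + q) p t := by
    simpa using ((hasDerivAt_id t).const_mul p).add_const q
  exact h.deriv

set_option maxHeartbeats 1600000 in
theorem stmt_3
    (c : ℝ) (hc1 : c ≠ -1) (hc0 : c ≠ 0)
    (E : ℝ → ℝ → ℝ → ℝ → ℝ)
    (hE : ∀ w x y z : ℝ, E w x y z = z * (y + c) * (x - 1) - w * (x + c) * (y - 1))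
    (u : ℤ × ℤ → ℝ)
    (hu : ∀ n m : ℤ, E (u (n, m)) (u (n + 1, m)) (u (n, m + 1)) (u (n + 1, m + 1)) = 0)
    (C : ℤ × ℤ → ℝ)
    (hC : ∀ n m : ℤ, C (n, m) = u (n, m + 1) * u (n, m) - (u (n, m + 1) + u (n, m) + c))
    (hCne : ∀ n m : ℤ, C (n, m) ≠ 0)
    (g : ℤ × ℤ → ℝ)
    (hg : ∀ n m : ℤ, g (n, m) = u (n, m) * (u (n, m) + c) * (1 / C (n, m) - 1 / C (n, m - 1)))
    (n m : ℤ) :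
    g (n, m) * deriv (fun w => E w (u (n + 1, m)) (u (n, m + 1)) (u (n + 1, m + 1))) (u (n, m))
      + g (n + 1, m) * deriv (fun x => E (u (n, m)) x (u (n, m + 1)) (u (n + 1, m + 1))) (u (n + 1, m))
      + g (n, m + 1) * deriv (fun y => E (u (n, m)) (u (n + 1, m)) y (u (n + 1, m + 1))) (u (n, m + 1))
      + g (n + 1, m + 1) * deriv (fun z => E (u (n, m)) (u (n + 1, m)) (u (n, m + 1)) z) (u (n + 1, m + 1)) = 0 := by
  have hm0 : m - 1 + 1 = m := by ring
  have hm2 : m + 1 + 1 = m + 2 := by ring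
  have hm1 : m + 1 - 1 = m := by ring
  have hR0 := hu n (m - 1)
  rw [hm0, hE] at hR0
  have hR1 := hu n m
  rw [hE] at hR1
  have hR2 := hu n (m + 1)
  rw [hm2, hE] at hR2
  have d1 : deriv (fun w => E w (u (n + 1, m)) (u (n, m + 1)) (u (n + 1, m + 1))) (u (n, m))
      = -((u (n + 1, m) + c) * (u (n, m + 1) - 1)) := by
    have h : (fun w => E w (u (n + 1, m)) (u (n, m + 1)) (u (n + 1, m + 1)))
        = fun w => (-((u (n + 1, m) + c) * (u (n, m + 1) - 1))) * w
            + u (n + 1, m + 1) * (u (n, m + 1) + c) * (u (n + 1, m) - 1) := by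
      funext w; rw [hE]; ring
    rw [h, daff]
  have d2 : deriv (fun x => E (u (n, m)) x (u (n, m + 1)) (u (n + 1, m + 1))) (u (n + 1, m))
      = u (n + 1, m + 1) * (u (n, m + 1) + c) - u (n, m) * (u (n, m + 1) - 1) := by
    have h : (fun x => E (u (n, m)) x (u (n, m + 1)) (u (n + 1, m + 1)))
        = fun x => (u (n + 1, m + 1) * (u (n, m + 1) + c) - u (n, m) * (u (n, m + 1) - 1)) * x
            + (-(u (n + 1, m + 1) * (u (n, m + 1) + c)) - u (n, m) * c * (u (n, m + 1) - 1)) := by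
      funext x; rw [hE]; ring
    rw [h, daff]
  have d3 : deriv (fun y => E (u (n, m)) (u (n + 1, m)) y (u (n + 1, m + 1))) (u (n, m + 1))
      = u (n + 1, m + 1) * (u (n + 1, m) - 1) - u (n, m) * (u (n + 1, m) + c) := by
    have h : (fun y => E (u (n, m)) (u (n + 1, m)) y (u (n + 1, m + 1)))
        = fun y => (u (n + 1, m + 1) * (u (n + 1, m) - 1) - u (n, m) * (u (n + 1, m) + c)) * y
            + (u (n + 1, m + 1) * c * (u (n + 1, m) - 1) + u (n, m) * (u (n + 1, m) + c)) := by
      funext y; rw [hE]; ring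
    rw [h, daff]
  have d4 : deriv (fun z => E (u (n, m)) (u (n + 1, m)) (u (n, m + 1)) z) (u (n + 1, m + 1))
      = (u (n, m + 1) + c) * (u (n + 1, m) - 1) := by
    have h : (fun z => E (u (n, m)) (u (n + 1, m)) (u (n, m + 1)) z)
        = fun z => ((u (n, m + 1) + c) * (u (n + 1, m) - 1)) * z
            + (-(u (n, m) * (u (n + 1, m) + c) * (u (n, m + 1) - 1))) := by
      funext z; rw [hE]; ring
    rw [h, daff]
  rw [d1, d2, d3, d4, hg n m, hg (n + 1) m, hg n (m + 1), hg (n + 1) (m + 1), hm1]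
  have hCa0 : C (n, m - 1) = u (n, m) * u (n, m - 1) - (u (n, m) + u (n, m - 1) + c) := by
    rw [hC, hm0]
  have hCa1 : C (n, m) = u (n, m + 1) * u (n, m) - (u (n, m + 1) + u (n, m) + c) := hC n m
  have hCa2 : C (n, m + 1) = u (n, m + 2) * u (n, m + 1) - (u (n, m + 2) + u (n, m + 1) + c) := by
    rw [hC, hm2]
  have hCb0 : C (n + 1, m - 1) = u (n + 1, m) * u (n + 1, m - 1) - (u (n + 1, m) + u (n + 1, m - 1) + c) := by
    rw [hC, hm0]
  have hCb1 : C (n + 1, m) = u (n + 1, m + 1) * u (n + 1, m) - (u (n + 1, m + 1) + u (n + 1, m) + c) := hC (n + 1) m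
  have hCb2 : C (n + 1, m + 1) = u (n + 1, m + 2) * u (n + 1, m + 1) - (u (n + 1, m + 2) + u (n + 1, m + 1) + c) := by
    rw [hC, hm2]
  have nA0 : u (n, m) * u (n, m - 1) - (u (n, m) + u (n, m - 1) + c) ≠ 0 := by
    rw [← hCa0]; exact hCne n (m - 1)
  have nA1 : u (n, m + 1) * u (n, m) - (u (n, m + 1) + u (n, m) + c) ≠ 0 := by
    rw [← hCa1]; exact hCne n m
  have nA2 : u (n, m + 2) * u (n, m + 1) - (u (n, m + 2) + u (n, m + 1) + c) ≠ 0 := by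
    rw [← hCa2]; exact hCne n (m + 1)
  have nB0 : u (n + 1, m) * u (n + 1, m - 1) - (u (n + 1, m) + u (n + 1, m - 1) + c) ≠ 0 := by
    rw [← hCb0]; exact hCne (n + 1) (m - 1)
  have nB1 : u (n + 1, m + 1) * u (n + 1, m) - (u (n + 1, m + 1) + u (n + 1, m) + c) ≠ 0 := by
    rw [← hCb1]; exact hCne (n + 1) m
  have nB2 : u (n + 1, m + 2) * u (n + 1, m + 1) - (u (n + 1, m + 2) + u (n + 1, m + 1) + c) ≠ 0 := by
    rw [← hCb2]; exact hCne (n + 1) (m + 1)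
  rw [hCa0, hCa1, hCa2, hCb0, hCb1, hCb2]
  set a0 := u (n, m - 1) with ha0
  set a1 := u (n, m) with ha1
  set a2 := u (n, m + 1) with ha2
  set a3 := u (n, m + 2) with ha3
  set b0 := u (n + 1, m - 1) with hb0
  set b1 := u (n + 1, m) with hb1
  set b2 := u (n + 1, m + 1) with hb2
  set b3 := u (n + 1, m + 2) with hb3
  have hqA0 : (a1*a0 - (a1 + a0 + c)) * (a1*a0 - (a1 + a0 + c))⁻¹ = 1 := mul_inv_cancel₀ (by
    intro h; exact nA0 (by linear_combination h))
  have hqA1 : (a2*a1 - (a2 + a1 + c)) * (a2*a1 - (a2 + a1 + c))⁻¹ = 1 := mul_inv_cancel₀ (by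
    intro h; exact nA1 (by linear_combination h))
  have hqA2 : (a3*a2 - (a3 + a2 + c)) * (a3*a2 - (a3 + a2 + c))⁻¹ = 1 := mul_inv_cancel₀ (by
    intro h; exact nA2 (by linear_combination h))
  have hqB0 : (b1*b0 - (b1 + b0 + c)) * (b1*b0 - (b1 + b0 + c))⁻¹ = 1 := mul_inv_cancel₀ (by
    intro h; exact nB0 (by linear_combination h))
  have hqB1 : (b2*b1 - (b2 + b1 + c)) * (b2*b1 - (b2 + b1 + c))⁻¹ = 1 := mul_inv_cancel₀ (by
    intro h; exact nB1 (by linear_combination h))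
  have hqB2 : (b3*b2 - (b3 + b2 + c)) * (b3*b2 - (b3 + b2 + c))⁻¹ = 1 := mul_inv_cancel₀ (by
    intro h; exact nB2 (by linear_combination h))
  have hG1 : (-(a1*(a1 + c)*(-((b1 + c)*(a2 - 1)))))*(b1*b0 - (b1 + b0 + c))*(b2*b1 - (b2 + b1 + c)) + (-(b1*(b1 + c)*(b2*(a2 + c) - a1*(a2 - 1))))*(a1*a0 - (a1 + a0 + c))*(b2*b1 - (b2 + b1 + c)) + (b1*(b1 + c)*(b2*(a2 + c) - a1*(a2 - 1)) - b2*(b2 + c)*((a2 + c)*(b1 - 1)))*(a1*a0 - (a1 + a0 + c))*(b1*b0 - (b1 + b0 + c)) = 0 := by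
    linear_combination (b2*c^2 + b2^2*c + (-1)*b1*b2*c^2 + (-2)*b1*b2^2*c + b1^2*b2*c + b1^2*b2^2*c + (-1)*b1^3*b2*c + a2*b2*c + a2*b2^2 + (-1)*a2*b1*b2*c + (-2)*a2*b1*b2^2 + a2*b1^2*b2 + a2*b1^2*b2^2 + (-1)*a2*b1^3*b2 + a1*b1*c + a1*b1^2 + (-1)*a1*b1^2*c + (-1)*a1*b1^3 + (-1)*a1*a2*b1*c + (-1)*a1*a2*b1^2 + a1*a2*b1^2*c + a1*a2*b1^3) * hR0 + ((-1)*c^3 + (-1)*b2*c^2 + (-2)*b1*c^2 + (-2)*b1*b2*c + b1*b2*c^2 + 2*b1^2*b2*c + (-1)*b1^3*c + (-1)*b0*c^2 + (-1)*b0*b2*c + b0*b1*c^2 + 2*b0*b1*b2*c + (-1)*b0*b1^2*c + (-1)*b0*b1^2*b2*c + b0*b1^3*c + (-1)*a1*c^2 + (-1)*a1*b2*c + (-2)*a1*b1*c + (-2)*a1*b1*b2 + a1*b1*b2*c + 2*a1*b1^2*b2 + (-1)*a1*b1^3 + (-1)*a1*b0*c + (-1)*a1*b0*b2 + a1*b0*b1*c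 + 2*a1*b0*b1*b2 + (-1)*a1*b0*b1^2 + (-1)*a1*b0*b1^2*b2 + a1*b0*b1^3 + (-1)*a0*b1*c + (-1)*a0*b1*b2 + a0*b1^2*c + a0*b1^2*b2 + a0*a1*b1*c + a0*a1*b1*b2 + (-1)*a0*a1*b1^2*c + (-1)*a0*a1*b1^2*b2) * hR1
  have hG2 : (a1*(a1 + c)*(-((b1 + c)*(a2 - 1))) - a2*(a2 + c)*(b2*(b1 - 1) - a1*(b1 + c)))*(a3*a2 - (a3 + a2 + c))*(b3*b2 - (b3 + b2 + c)) + (a2*(a2 + c)*(b2*(b1 - 1) - a1*(b1 + c)))*(a2*a1 - (a2 + a1 + c))*(b3*b2 - (b3 + b2 + c)) + (b2*(b2 + c)*((a2 + c)*(b1 - 1)))*(a2*a1 - (a2 + a1 + c))*(a3*a2 - (a3 + a2 + c)) = 0 := by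
    linear_combination (c^3 + b3*c^2 + b2*c^2 + (-2)*b2*b3*c^2 + b2^2*b3*c^2 + a3*c^2 + a3*b3*c + a3*b2*c + (-2)*a3*b2*b3*c + a3*b2^2*b3*c + a2*c^2 + a2*b3*c + a2*b2*c + a2*b2*c^2 + (-2)*a2*b2*b3*c + a2*b2^2*c + a2*b2^2*b3*c + (-1)*a2*a3*b2*c^2 + (-1)*a2*a3*b2*b3 + (-1)*a2*a3*b2^2*c + a2*a3*b2^2*b3 + a2^2*b2*c + a2^2*b2^2 + a2^2*a3*c + a2^2*a3*b3 + a2^2*a3*b2 + (-1)*a2^2*a3*b2*c + (-1)*a2^2*a3*b2*b3 + (-1)*a2^2*a3*b2^2 + a1*c^2 + a1*b3*c + a1*b2*c + (-1)*a1*b2*b3*c + a1*a3*c + a1*a3*b3 + a1*a3*b2 + (-1)*a1*a3*b2*b3 + a1*a2*c + (-1)*a1*a2*c^2 + a1*a2*b3 + (-1)*a1*a2*b3*c + a1*a2*b2 + (-1)*a1*a2*b2*c + (-1)*a1*a2*b2*b3 + a1*a2*b2*b3*c + (-1)*a1*a2*a3*c + (-1)*a1*a2*a3*b3 + (-1)*a1*a2*a3*b2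 + a1*a2*a3*b2*b3 + (-1)*a1*a2^2*c + (-1)*a1*a2^2*b3 + (-1)*a1*a2^2*b2 + a1*a2^2*b2*b3) * hR1 + ((-1)*b2*c^2 + b2^2*c^2 + b1*b2*c^2 + (-1)*b1*b2^2*c^2 + (-2)*a2*b2*c + 2*a2*b2^2*c + 2*a2*b1*b2*c + (-2)*a2*b1*b2^2*c + (-1)*a2^2*b2 + a2^2*b2^2 + a2^2*b1*b2 + (-1)*a2^2*b1*b2^2 + (-1)*a1*b2*c + (-1)*a1*b2*c^2 + (-1)*a1*a2*b2 + a1*a2*b2*c^2 + a1*a2^2*b2 + a1*a2^2*b2*c) * hR2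
  linear_combination ((a1*a0 - (a1 + a0 + c))⁻¹*(b1*b0 - (b1 + b0 + c))⁻¹*(b2*b1 - (b2 + b1 + c))⁻¹) * hG1 + ((a2*a1 - (a2 + a1 + c))⁻¹*(a3*a2 - (a3 + a2 + c))⁻¹*(b3*b2 - (b3 + b2 + c))⁻¹) * hG2
      + (-((-(a1*(a1 + c)*(-((b1 + c)*(a2 - 1)))))*(a1*a0 - (a1 + a0 + c))⁻¹))*(((b2*b1 - (b2 + b1 + c))*(b2*b1 - (b2 + b1 + c))⁻¹) * hqB0 + hqB1)
      + (-((-(b1*(b1 + c)*(b2*(a2 + c) - a1*(a2 - 1))))*(b1*b0 - (b1 + b0 + c))⁻¹))*(((b2*b1 - (b2 + b1 + c))*(b2*b1 - (b2 + b1 + c))⁻¹) * hqA0 + hqB1)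
      + (-((b1*(b1 + c)*(b2*(a2 + c) - a1*(a2 - 1)) - b2*(b2 + c)*((a2 + c)*(b1 - 1)))*(b2*b1 - (b2 + b1 + c))⁻¹))*(((b1*b0 - (b1 + b0 + c))*(b1*b0 - (b1 + b0 + c))⁻¹) * hqA0 + hqB0)
      + (-((a1*(a1 + c)*(-((b1 + c)*(a2 - 1))) - a2*(a2 + c)*(b2*(b1 - 1) - a1*(b1 + c)))*(a2*a1 - (a2 + a1 + c))⁻¹))*(((b3*b2 - (b3 + b2 + c))*(b3*b2 - (b3 + b2 + c))⁻¹) * hqA2 + hqB2)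
      + (-((a2*(a2 + c)*(b2*(b1 - 1) - a1*(b1 + c)))*(a3*a2 - (a3 + a2 + c))⁻¹))*(((b3*b2 - (b3 + b2 + c))*(b3*b2 - (b3 + b2 + c))⁻¹) * hqA1 + hqB2)
      + (-((b2*(b2 + c)*((a2 + c)*(b1 - 1)))*(b3*b2 - (b3 + b2 + c))⁻¹))*(((a3*a2 - (a3 + a2 + c))*(a3*a2 - (a3 + a2 + c))⁻¹) * hqA1 + hqA2)
end

section
/- Let ν ∈ ℝ with ν² ≠ 1. The lattice equation with polynomial E(w,x,y,z) = (1+wx)(νz+y) - (1+yz)(νw+x), i.e. (1 + u_{n,m}u_{n+1,m})(ν u_{n+1,m+1} + u_{n,m+1}) = (1 + u_{n,m+1}u_{n+1,m+1})(ν u_{n,m} + u_{n+1,m}), admits the five-point generalized symmetry with generator g_{n,m} = ((u_{n,m}² - ν)(ν u_{n,m}² - 1)/u_{n,m})·(1/(u_{n,m+1}u_{n,m}-1) - 1/(u_{n,m}u_{n,m-1}-1)): for every solution u : ℤ × ℤ → ℝ of the equation satisfying u_{n,m} ≠ 0 and u_{n,m+1}u_{n,m} - 1 ≠ 0 for all (n,m),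 and every (n,m) ∈ ℤ², the linearized equation g_{n,m}·∂₁E + g_{n+1,m}·∂₂E + g_{n,m+1}·∂₃E + g_{n+1,m+1}·∂₄E = 0 holds, where each ∂ᵢE is evaluated at (u_{n,m}, u_{n+1,m}, u_{n,m+1}, u_{n+1,m+1}). -/
/-!
On a solution of the quad equation `Q(w, x, y, z) = 0` the partial derivatives are proportional
along each horizontal edge: `(ν w² - 1) ∂_w Q = (x² - ν) ∂_x Q` and
`(y² - ν) ∂_y Q = (ν z² - 1) ∂_z Q`.
Hence the two lower vertices contribute `(x² - ν) ∂_x Q` times a difference of two sums over the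
vertical edges, and likewise for the two upper vertices. Such an edge sum of the vertex weights
equals an explicit rational function of the edge's endpoints plus a multiple of `Q` on the square
the edges span; so the contributions of the squares below and above vanish, and what is left is a
multiple of `(x² - ν) ∂_x Q + (ν z² - 1) ∂_z Q = (x + ν z) Q`.
-/

namespace QuadSymmetry

variable (ν : ℝ)

def quad (w x y z : ℝ) : ℝ := (1 + w * x) * (ν * z + y) - (1 + y * z) * (ν * w + x)

def quadDw (x y z : ℝ) : ℝ := x * (ν * z + y) - ν * (1 + y * z)

def quadDx (w y z : ℝ) : ℝ := w * (ν * z + y) - (1 + y * z)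

def quadDy (w x z : ℝ) : ℝ := (1 + w * x) - z * (ν * w + x)

def quadDz (w x y : ℝ) : ℝ := ν * (1 + w * x) - y * (ν * w + x)

noncomputable def symmetryGen (uPrev u uNext : ℝ) : ℝ :=
  (u ^ 2 - ν) * (ν * u ^ 2 - 1) / u * (1 / (uNext * u - 1) - 1 / (u * uPrev - 1))

lemma deriv_quad_w (w x y z : ℝ) : deriv (fun w => quad ν w x y z) w = quadDw ν x y z := by
  have affine : (fun w => quad ν w x y z) =
      fun w => quadDw ν x y z * w + (ν * z + y - (1 + y * z) * x) := by
    funext w; simp only [quad, quadDw]; ring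
  rw [affine]; simp

lemma deriv_quad_x (w x y z : ℝ) : deriv (fun x => quad ν w x y z) x = quadDx ν w y z := by
  have affine : (fun x => quad ν w x y z) =
      fun x => quadDx ν w y z * x + (ν * z + y - (1 + y * z) * ν * w) := by
    funext x; simp only [quad, quadDx]; ring
  rw [affine]; simp

lemma deriv_quad_y (w x y z : ℝ) : deriv (fun y => quad ν w x y z) y = quadDy ν w x z := by
  have affine : (fun y => quad ν w x y z) =
      fun y => quadDy ν w x z * y + ((1 + w * x) * ν * z - (ν * w + x)) := by
    funext y; simp only [quad, quadDy]; ring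
  rw [affine]; simp

lemma deriv_quad_z (w x y z : ℝ) : deriv (fun z => quad ν w x y z) z = quadDz ν w x y := by
  have affine : (fun z => quad ν w x y z) =
      fun z => quadDz ν w x y * z + ((1 + w * x) * y - (ν * w + x)) := by
    funext z; simp only [quad, quadDz]; ring
  rw [affine]; simp

lemma quadDw_eq (w x y z : ℝ) :
    (ν * w ^ 2 - 1) * quadDw ν x y z =
      (x ^ 2 - ν) * quadDx ν w y z + (ν * w - x) * quad ν w x y z := by
  simp only [quad, quadDw, quadDx]; ring

lemma quadDy_eq (w x y z : ℝ) :
    (y ^ 2 - ν) * quadDy ν w x z =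
      (ν * z ^ 2 - 1) * quadDz ν w x y - (ν * z - y) * quad ν w x y z := by
  simp only [quad, quadDy, quadDz]; ring

lemma quadDx_add_quadDz (w x y z : ℝ) :
    (x ^ 2 - ν) * quadDx ν w y z + (ν * z ^ 2 - 1) * quadDz ν w x y =
      (x + ν * z) * quad ν w x y z := by
  simp only [quad, quadDx, quadDz]; ring

variable {ν}

lemma weight_sum_lower {a b c d : ℝ} (hc : c ≠ 0) (hd : d ≠ 0) (hca : c * a - 1 ≠ 0)
    (hdb : d * b - 1 ≠ 0) :
    (c ^ 2 - ν) / c * (1 / (c * a - 1)) + (ν * d ^ 2 - 1) / d * (1 / (d * b - 1)) =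
      (ν * d + c) / (c * d) - quad ν a b c d / ((c * a - 1) * (d * b - 1)) := by
  field_simp
  simp only [quad]
  ring

lemma weight_sum_upper {a b e f : ℝ} (he : e ≠ 0) (hf : f ≠ 0) (hea : e * a - 1 ≠ 0)
    (hfb : f * b - 1 ≠ 0) :
    (ν * e ^ 2 - 1) / e * (1 / (e * a - 1)) + (f ^ 2 - ν) / f * (1 / (f * b - 1)) =
      (ν * e + f) / (e * f) + quad ν e f a b / ((e * a - 1) * (f * b - 1)) := by
  field_simp
  simp only [quad]
  ring

lemma lower_contribution {a b c d e f : ℝ} (hc : c ≠ 0) (hd : d ≠ 0) (hca : c * a - 1 ≠ 0)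
    (hdb : d * b - 1 ≠ 0) (hec : e * c - 1 ≠ 0) (hfd : f * d - 1 ≠ 0)
    (hbelow : quad ν a b c d = 0) (hsq : quad ν c d e f = 0) :
    symmetryGen ν a c e * quadDw ν d e f + symmetryGen ν b d f * quadDx ν c e f =
      -((d ^ 2 - ν) * quadDx ν c e f * quad ν e f c d / ((e * c - 1) * (f * d - 1))) := by
  have below := weight_sum_lower (ν := ν) hc hd hca hdb
  have above := weight_sum_lower (ν := ν) hc hd (a := e) (b := f)
    (by rwa [mul_comm]) (by rwa [mul_comm])
  rw [hbelow, zero_div, sub_zero] at below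
  unfold symmetryGen
  linear_combination ((c ^ 2 - ν) / c * (1 / (e * c - 1) - 1 / (c * a - 1))) *
      (quadDw_eq ν c d e f + (ν * c - d) * hsq) +
    (d ^ 2 - ν) * quadDx ν c e f * (above - below)

lemma upper_contribution {c d e f p q : ℝ} (he : e ≠ 0) (hf : f ≠ 0) (hec : e * c - 1 ≠ 0)
    (hfd : f * d - 1 ≠ 0) (hpe : p * e - 1 ≠ 0) (hqf : q * f - 1 ≠ 0)
    (hsq : quad ν c d e f = 0) (habove : quad ν e f p q = 0) :
    symmetryGen ν c e p * quadDy ν c d f + symmetryGen ν d f q * quadDz ν c d e =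
      -((ν * f ^ 2 - 1) * quadDz ν c d e * quad ν e f c d / ((e * c - 1) * (f * d - 1))) := by
  have below := weight_sum_upper (ν := ν) he hf hec hfd
  have above := weight_sum_upper (ν := ν) he hf (a := p) (b := q)
    (by rwa [mul_comm]) (by rwa [mul_comm])
  rw [habove, zero_div, add_zero] at above
  unfold symmetryGen
  linear_combination ((ν * e ^ 2 - 1) / e * (1 / (p * e - 1) - 1 / (e * c - 1))) *
      (quadDy_eq ν c d e f - (ν * f - e) * hsq) +
    (ν * f ^ 2 - 1) * quadDz ν c d e * (above - below)

theorem linearization_eq_zero {a b c d e f p q : ℝ} (hc : c ≠ 0) (hd : d ≠ 0) (he : e ≠ 0)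
    (hf : f ≠ 0) (hca : c * a - 1 ≠ 0) (hdb : d * b - 1 ≠ 0) (hec : e * c - 1 ≠ 0)
    (hfd : f * d - 1 ≠ 0) (hpe : p * e - 1 ≠ 0) (hqf : q * f - 1 ≠ 0)
    (hbelow : quad ν a b c d = 0) (hsq : quad ν c d e f = 0) (habove : quad ν e f p q = 0) :
    symmetryGen ν a c e * quadDw ν d e f + symmetryGen ν b d f * quadDx ν c e f
      + symmetryGen ν c e p * quadDy ν c d f + symmetryGen ν d f q * quadDz ν c d e = 0 := by
  rw [add_assoc, lower_contribution hc hd hca hdb hec hfd hbelow hsq,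
    upper_contribution he hf hec hfd hpe hqf hsq habove]
  linear_combination (-quad ν e f c d / ((e * c - 1) * (f * d - 1))) *
    (quadDx_add_quadDz ν c d e f + (d + ν * f) * hsq)

end QuadSymmetry

open QuadSymmetry in
theorem stmt_5_general
    (ν : ℝ)
    (E : ℝ → ℝ → ℝ → ℝ → ℝ)
    (hE : ∀ w x y z : ℝ, E w x y z = (1 + w * x) * (ν * z + y) - (1 + y * z) * (ν * w + x))
    (u : ℤ × ℤ → ℝ)
    (hu : ∀ n m : ℤ, E (u (n, m)) (u (n + 1, m)) (u (n, m + 1)) (u (n + 1, m + 1)) = 0)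
    (hne0 : ∀ n m : ℤ, u (n, m) ≠ 0)
    (hne1 : ∀ n m : ℤ, u (n, m + 1) * u (n, m) - 1 ≠ 0)
    (g : ℤ × ℤ → ℝ)
    (hg : ∀ n m : ℤ, g (n, m) = (u (n, m) ^ 2 - ν) * (ν * u (n, m) ^ 2 - 1) / u (n, m) * (1 / (u (n, m + 1) * u (n, m) - 1) - 1 / (u (n, m) * u (n, m - 1) - 1)))
    (n m : ℤ) :
    g (n, m) * deriv (fun w => E w (u (n + 1, m)) (u (n, m + 1)) (u (n + 1, m + 1))) (u (n, m))
      + g (n + 1, m) * deriv (fun x => E (u (n, m)) x (u (n, m + 1)) (u (n + 1, m + 1))) (u (n + 1, m))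
      + g (n, m + 1) * deriv (fun y => E (u (n, m)) (u (n + 1, m)) y (u (n + 1, m + 1))) (u (n, m + 1))
      + g (n + 1, m + 1) * deriv (fun z => E (u (n, m)) (u (n + 1, m)) (u (n, m + 1)) z) (u (n + 1, m + 1)) = 0 := by
  obtain rfl : E = quad ν := funext fun w => funext fun x => funext fun y => funext (hE w x y)
  have hgen : ∀ n m : ℤ, g (n, m) = symmetryGen ν (u (n, m - 1)) (u (n, m)) (u (n, m + 1)) := hg
  have hbelow := hu n (m - 1)
  have hdb := hne1 (n + 1) (m - 1)
  have hca := hne1 n (m - 1)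
  rw [sub_add_cancel] at hbelow hca hdb
  rw [deriv_quad_w, deriv_quad_x, deriv_quad_y, deriv_quad_z, hgen, hgen, hgen, hgen,
    add_sub_cancel_right]
  exact linearization_eq_zero (hne0 n m) (hne0 (n + 1) m) (hne0 n (m + 1)) (hne0 (n + 1) (m + 1))
    hca hdb (hne1 n m) (hne1 (n + 1) m) (hne1 n (m + 1)) (hne1 (n + 1) (m + 1))
    hbelow (hu n m) (hu n (m + 1))

theorem stmt_5
    (ν : ℝ) (hν : ν ^ 2 ≠ 1)
    (E : ℝ → ℝ → ℝ → ℝ → ℝ)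
    (hE : ∀ w x y z : ℝ, E w x y z = (1 + w * x) * (ν * z + y) - (1 + y * z) * (ν * w + x))
    (u : ℤ × ℤ → ℝ)
    (hu : ∀ n m : ℤ, E (u (n, m)) (u (n + 1, m)) (u (n, m + 1)) (u (n + 1, m + 1)) = 0)
    (hne0 : ∀ n m : ℤ, u (n, m) ≠ 0)
    (hne1 : ∀ n m : ℤ, u (n, m + 1) * u (n, m) - 1 ≠ 0)
    (g : ℤ × ℤ → ℝ)
    (hg : ∀ n m : ℤ, g (n, m) = (u (n, m) ^ 2 - ν) * (ν * u (n, m) ^ 2 - 1) / u (n, m) * (1 / (u (n, m + 1) * u (n, m) - 1) - 1 / (u (n, m) * u (n, m - 1) - 1)))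
    (n m : ℤ) :
    g (n, m) * deriv (fun w => E w (u (n + 1, m)) (u (n, m + 1)) (u (n + 1, m + 1))) (u (n, m))
      + g (n + 1, m) * deriv (fun x => E (u (n, m)) x (u (n, m + 1)) (u (n + 1, m + 1))) (u (n + 1, m))
      + g (n, m + 1) * deriv (fun y => E (u (n, m)) (u (n + 1, m)) y (u (n + 1, m + 1))) (u (n, m + 1))
      + g (n + 1, m + 1) * deriv (fun z => E (u (n, m)) (u (n + 1, m)) (u (n, m + 1)) z) (u (n + 1, m + 1)) = 0 :=
  stmt_5_general ν E hE u hu hne0 hne1 g hg n m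
end

section
/- The lattice equation with polynomial E(w,x,y,z) = (wz+1)(x+y) + 2(xy+1)(w+z), i.e. (u_{n,m}u_{n+1,m+1}+1)(u_{n+1,m}+u_{n,m+1}) + 2(u_{n+1,m}u_{n,m+1}+1)(u_{n,m}+u_{n+1,m+1}) = 0, admits the five-point generalized symmetry with generator g_{n,m} = (u_{n,m}² - 1)(u_{n+1,m} - u_{n-1,m})/(u_{n+1,m}u_{n-1,m} - 1): for every solution u : ℤ × ℤ → ℝ of the equation satisfying u_{n+1,m}u_{n-1,m} ≠ 1 for all (n,m), and every (n,m) ∈ ℤ², the linearized equation g_{n,m}·∂₁E + g_{n+1,m}·∂₂E + g_{n,m+1}·∂₃E + g_{n+1,m+1}·∂₄E = 0 holds, where each ∂ᵢE is evaluated at (u_{n,m}, u_{n+1,m}, u_{n,m+1}, u_{n+1,m+1}). -/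
/-!
Split the linearized equation on the quad with corners `b = u (n, m)`, `c = u (n+1, m)`,
`B = u (n, m+1)`, `C = u (n+1, m+1)` into the terms carrying `g (n, m)`, `g (n, m+1)`, which
involve the left neighbour column `a`, `A`, and the terms carrying `g (n+1, m)`, `g (n+1, m+1)`,
which involve the right neighbour column `d`, `D`. Using the equations on the left and the
middle quad, the left half equals `-3 (b + C) (c B + 1)`, independently of `a` and `A`. The
equation is invariant under the rotation `(w, x, y, z) ↦ (z, y, x, w)` of the quad, which
reverses the sign of the generator, so the right half equals `3 (b + C) (c B + 1)`.

Behind the cancellation: writing `u = tanh θ`, the equation reads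
`tanh (θ_{n+1,m} + θ_{n,m+1}) = -2 tanh (θ_{n,m} + θ_{n+1,m+1})` and the flow reads
`θ_t = tanh (θ_{n+1,m} - θ_{n-1,m})`.
-/

def quadPoly (w x y z : ℝ) : ℝ :=
  (w * z + 1) * (x + y) + 2 * (x * y + 1) * (w + z)

noncomputable def symGen (a b c : ℝ) : ℝ :=
  (b ^ 2 - 1) * (c - a) / (c * a - 1)

theorem quadPoly_rotate (w x y z : ℝ) : quadPoly z y x w = quadPoly w x y z := by
  unfold quadPoly
  ring

theorem symGen_swap (a b c : ℝ) : symGen c b a = -symGen a b c := by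
  unfold symGen
  rw [mul_comm a c]
  ring

theorem deriv_eq_of_affine {f : ℝ → ℝ} {k q : ℝ} (hf : ∀ t, f t = k * t + q) (t : ℝ) :
    deriv f t = k := by
  rw [funext hf]
  exact (((hasDerivAt_id t).const_mul k).add_const q).deriv.trans (mul_one k)

theorem deriv_quadPoly₁ (w x y z : ℝ) :
    deriv (fun w => quadPoly w x y z) w = z * (x + y) + 2 * (x * y + 1) :=
  deriv_eq_of_affine (q := x + y + 2 * (x * y + 1) * z) (fun _ => by unfold quadPoly; ring) w

theorem deriv_quadPoly₂ (w x y z : ℝ) :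
    deriv (fun x => quadPoly w x y z) x = (w * z + 1) + 2 * y * (w + z) :=
  deriv_eq_of_affine (q := (w * z + 1) * y + 2 * (w + z)) (fun _ => by unfold quadPoly; ring) x

theorem deriv_quadPoly₃ (w x y z : ℝ) :
    deriv (fun y => quadPoly w x y z) y = (w * z + 1) + 2 * x * (w + z) :=
  deriv_eq_of_affine (q := (w * z + 1) * x + 2 * (w + z)) (fun _ => by unfold quadPoly; ring) y

theorem deriv_quadPoly₄ (w x y z : ℝ) :
    deriv (fun z => quadPoly w x y z) z = w * (x + y) + 2 * (x * y + 1) :=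
  deriv_eq_of_affine (q := x + y + 2 * (x * y + 1) * w) (fun _ => by unfold quadPoly; ring) z

theorem symGen_flux_left {a b c A B C : ℝ} (hleft : quadPoly a b A B = 0)
    (hmid : quadPoly b c B C = 0) (hca : c * a ≠ 1) (hCA : C * A ≠ 1) :
    symGen a b c * (C * (c + B) + 2 * (c * B + 1))
      + symGen A B C * ((b * C + 1) + 2 * c * (b + C)) = -3 * (b + C) * (c * B + 1) := by
  have hca' : c * a - 1 ≠ 0 := sub_ne_zero.mpr hca
  have hCA' : C * A - 1 ≠ 0 := sub_ne_zero.mpr hCA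
  unfold symGen
  unfold quadPoly at hleft hmid
  field_simp
  linear_combination (-(c ^ 2 - 1) * (C ^ 2 - 1)) * hleft
    + (b * c * A * C + a * c * B * C + 2 * a * c * A * C - a * c * A * B - a * b * A * C
      - B * C - 2 * A * C + A * B + c * C - c * A - b * c - a * C + a * A - 2 * a * c
      + a * b + 2) * hmid

theorem symGen_flux_right {b c d B C D : ℝ} (hmid : quadPoly b c B C = 0)
    (hright : quadPoly c d C D = 0) (hdb : d * b ≠ 1) (hDB : D * B ≠ 1) :
    symGen b c d * ((b * C + 1) + 2 * B * (b + C))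
      + symGen B C D * (b * (c + B) + 2 * (c * B + 1)) = 3 * (b + C) * (c * B + 1) := by
  have hleft := symGen_flux_left (a := D) (b := C) (c := B) (A := d) (B := c) (C := b)
    (by rwa [quadPoly_rotate]) (by rwa [quadPoly_rotate]) (by rwa [mul_comm]) (by rwa [mul_comm])
  rw [symGen_swap B, symGen_swap b] at hleft
  linear_combination -hleft

theorem stmt_6
    (E : ℝ → ℝ → ℝ → ℝ → ℝ)
    (hE : ∀ w x y z : ℝ, E w x y z = (w * z + 1) * (x + y) + 2 * (x * y + 1) * (w + z))
    (u : ℤ × ℤ → ℝ)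
    (hu : ∀ n m : ℤ, E (u (n, m)) (u (n + 1, m)) (u (n, m + 1)) (u (n + 1, m + 1)) = 0)
    (hne : ∀ n m : ℤ, u (n + 1, m) * u (n - 1, m) ≠ 1)
    (g : ℤ × ℤ → ℝ)
    (hg : ∀ n m : ℤ, g (n, m) = (u (n, m) ^ 2 - 1) * (u (n + 1, m) - u (n - 1, m)) / (u (n + 1, m) * u (n - 1, m) - 1))
    (n m : ℤ) :
    g (n, m) * deriv (fun w => E w (u (n + 1, m)) (u (n, m + 1)) (u (n + 1, m + 1))) (u (n, m))
      + g (n + 1, m) * deriv (fun x => E (u (n, m)) x (u (n, m + 1)) (u (n + 1, m + 1))) (u (n + 1, m))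
      + g (n, m + 1) * deriv (fun y => E (u (n, m)) (u (n + 1, m)) y (u (n + 1, m + 1))) (u (n, m + 1))
      + g (n + 1, m + 1) * deriv (fun z => E (u (n, m)) (u (n + 1, m)) (u (n, m + 1)) z) (u (n + 1, m + 1)) = 0 := by
  obtain rfl : E = quadPoly := by ext w x y z; exact hE w x y z
  have hsym : ∀ n m : ℤ, g (n, m) = symGen (u (n - 1, m)) (u (n, m)) (u (n + 1, m)) := hg
  have hleftQuad := hu (n - 1) m
  have hne_right := hne (n + 1) m
  have hne_right' := hne (n + 1) (m + 1)
  rw [sub_add_cancel] at hleftQuad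
  rw [add_sub_cancel_right] at hne_right hne_right'
  have hleft := symGen_flux_left hleftQuad (hu n m) (hne n m) (hne n (m + 1))
  have hright := symGen_flux_right (hu n m) (hu (n + 1) m) hne_right hne_right'
  rw [hsym, hsym, hsym, hsym, deriv_quadPoly₁, deriv_quadPoly₂, deriv_quadPoly₃, deriv_quadPoly₄]
  simp only [add_sub_cancel_right]
  linear_combination hleft + hright
end

section
/- Let a, b ∈ ℝ. The lattice equation with polynomial E(w,x,y,z) = (w-y+a)(x-z+a) + y - x + b, i.e. (u_{n,m}-u_{n,m+1}+a)(u_{n+1,m}-u_{n+1,m+1}+a) + u_{n,m+1} - u_{n+1,m} + b = 0, admits the five-point generalized symmetry with generator g_{n,m} = (u_{n+1,m} - u_{n,m} - a - b)(u_{n,m} - u_{n-1,m} - a - b): for every solution u : ℤ × ℤ → ℝ of the equation and every (n,m) ∈ ℤ², the linearized equation g_{n,m}·∂₁E + g_{n+1,m}·∂₂E + g_{n,m+1}·∂₃E + g_{n+1,m+1}·∂₄E = 0 holds, where each ∂ᵢE is evaluated at (u_{n,m}, u_{n+1,m}, u_{n,m+1}, u_{n+1,m+1}). -/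
/-!
Write `p k := u (k, m) - u (k, m + 1) + a`. The quad equation at `(k, m)` factorises both
horizontal differences of the generator along the edge:
`u (k+1, m) - u (k, m) - a - b = p k * (p (k+1) - 1)` and
`u (k+1, m+1) - u (k, m+1) - a - b = p (k+1) * (p k - 1)`.
The partial derivatives of `E` at `(n, m)` are `p (n+1)`, `p n - 1`, `1 - p (n+1)` and `-p n`, so
after these substitutions every term of the linearized equation carries the common factor
`p n * p (n+1) * (p n - 1) * (p (n+1) - 1)`, and the remaining factors
`p (n-1) + (p (n+2) - 1) - (p (n-1) - 1) - p (n+2)` cancel.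
-/

def quadEq (a b w x y z : ℝ) : ℝ := (w - y + a) * (x - z + a) + y - x + b

section Derivatives

variable {a b : ℝ} (w x y z : ℝ)

theorem deriv_quadEq_fst : deriv (fun t => quadEq a b t x y z) w = x - z + a := by
  simp (disch := fun_prop) [quadEq]

theorem deriv_quadEq_snd : deriv (fun t => quadEq a b w t y z) x = w - y + a - 1 := by
  simp (disch := fun_prop) [quadEq]

theorem deriv_quadEq_thd : deriv (fun t => quadEq a b w x t z) y = 1 - (x - z + a) := by
  simp (disch := fun_prop) [quadEq]
  ring

theorem deriv_quadEq_fth : deriv (fun t => quadEq a b w x y t) z = -(w - y + a) := by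
  simp (disch := fun_prop) [quadEq]

end Derivatives

section Factorisation

variable {a b w x y z : ℝ}

theorem bottom_diff_eq_of_quadEq_eq_zero (h : quadEq a b w x y z = 0) :
    x - w - a - b = (w - y + a) * (x - z + a - 1) := by
  unfold quadEq at h
  linear_combination -h

theorem top_diff_eq_of_quadEq_eq_zero (h : quadEq a b w x y z = 0) :
    z - y - a - b = (x - z + a) * (w - y + a - 1) := by
  unfold quadEq at h
  linear_combination -h

end Factorisation

theorem stmt_8
    (a b : ℝ)
    (E : ℝ → ℝ → ℝ → ℝ → ℝ)
    (hE : ∀ w x y z : ℝ, E w x y z = (w - y + a) * (x - z + a) + y - x + b)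
    (u : ℤ × ℤ → ℝ)
    (hu : ∀ n m : ℤ, E (u (n, m)) (u (n + 1, m)) (u (n, m + 1)) (u (n + 1, m + 1)) = 0)
    (g : ℤ × ℤ → ℝ)
    (hg : ∀ n m : ℤ, g (n, m) = (u (n + 1, m) - u (n, m) - a - b) * (u (n, m) - u (n - 1, m) - a - b))
    (n m : ℤ) :
    g (n, m) * deriv (fun w => E w (u (n + 1, m)) (u (n, m + 1)) (u (n + 1, m + 1))) (u (n, m))
      + g (n + 1, m) * deriv (fun x => E (u (n, m)) x (u (n, m + 1)) (u (n + 1, m + 1))) (u (n + 1, m))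
      + g (n, m + 1) * deriv (fun y => E (u (n, m)) (u (n + 1, m)) y (u (n + 1, m + 1))) (u (n, m + 1))
      + g (n + 1, m + 1) * deriv (fun z => E (u (n, m)) (u (n + 1, m)) (u (n, m + 1)) z) (u (n + 1, m + 1)) = 0 := by
  obtain rfl : E = quadEq a b := by
    funext w x y z
    exact hE w x y z
  have hprev := hu (n - 1) m
  have hcur := hu n m
  have hnext := hu (n + 1) m
  rw [sub_add_cancel] at hprev
  rw [deriv_quadEq_fst, deriv_quadEq_snd, deriv_quadEq_thd, deriv_quadEq_fth,
    hg n m, hg (n + 1) m, hg n (m + 1), hg (n + 1) (m + 1), add_sub_cancel_right,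
    bottom_diff_eq_of_quadEq_eq_zero hprev, bottom_diff_eq_of_quadEq_eq_zero hcur,
    bottom_diff_eq_of_quadEq_eq_zero hnext, top_diff_eq_of_quadEq_eq_zero hprev,
    top_diff_eq_of_quadEq_eq_zero hcur, top_diff_eq_of_quadEq_eq_zero hnext]
  ring
end

section
/- Let c₁, c₂, c₃ ∈ ℝ with c₁c₃ - c₂² ≠ 0, and set c = c₂/(c₁c₃ - c₂²). The lattice equation with polynomial E(w,x,y,z) = wy + c₁wx + c₃yz + c₂(wz + xy), i.e. u_{n,m}u_{n,m+1} + c₁u_{n,m}u_{n+1,m} + c₃u_{n,m+1}u_{n+1,m+1} + c₂(u_{n,m}u_{n+1,m+1} + u_{n+1,m}u_{n,m+1}) = 0, admits the five-point generalized symmetry with generator g_{n,m} = (u_{n+1,m} - c·u_{n,m})(u_{n,m}/u_{n-1,m} - c): for every solution u : ℤ × ℤ → ℝ of the equation satisfying u_{n,m} ≠ 0 for all (n,m), and every (n,m) ∈ ℤ², the linearized equation g_{n,m}·∂₁E + g_{n+1,m}·∂₂E + g_{n,m+1}·∂₃E + g_{n+1,m+1}·∂₄E = 0 holds, where each ∂ᵢE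 is evaluated at (u_{n,m}, u_{n+1,m}, u_{n,m+1}, u_{n+1,m+1}). -/
/-!
Write `D = c₁c₃ - c₂²` and `X_{n,m} = u_{n+1,m} - c u_{n,m}`, so that
`g_{n,m} = X_{n,m} (u_{n,m}/u_{n-1,m} - c)` and `g_{n+1,m} = X_{n+1,m} X_{n,m} / u_{n,m}`.
The linearized equation on a quad splits into the contribution of its left edge (`∂₁E`, `∂₃E`)
and of its right edge (`∂₂E`, `∂₄E`). On the left edge, the equation on the quad itself makes both
terms proportional to the coefficients `(c₂w + c₃y, c₁w + c₂y)` of `1/p, 1/q` in the equation on the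
quad to the left, which therefore collapses the sum to `X_{n,m} X_{n,m+1}`. On the right edge, the
identity `D (x - c w) y = (c₂w + c₃y)(c₁x + c₂z)` (valid on solutions, and its mirror image) lets the
equation on the quad to the right collapse the sum to `-X_{n,m} X_{n,m+1}`.
-/

def latticeQuad (c₁ c₂ c₃ w x y z : ℝ) : ℝ :=
  w * y + c₁ * (w * x) + c₃ * (y * z) + c₂ * (w * z + x * y)

lemma deriv_mul_add_const (a b t : ℝ) : deriv (fun s => a * s + b) t = a := by
  simp

variable {c₁ c₂ c₃ : ℝ}

lemma deriv_latticeQuad_fst (x y z w₀ : ℝ) :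
    deriv (fun w => latticeQuad c₁ c₂ c₃ w x y z) w₀ = y + c₁ * x + c₂ * z := by
  rw [show (fun w => latticeQuad c₁ c₂ c₃ w x y z)
      = fun w => (y + c₁ * x + c₂ * z) * w + (c₃ * (y * z) + c₂ * (x * y)) from
    funext fun w => by unfold latticeQuad; ring, deriv_mul_add_const]

lemma deriv_latticeQuad_snd (w y z x₀ : ℝ) :
    deriv (fun x => latticeQuad c₁ c₂ c₃ w x y z) x₀ = c₁ * w + c₂ * y := by
  rw [show (fun x => latticeQuad c₁ c₂ c₃ w x y z)
      = fun x => (c₁ * w + c₂ * y) * x + (w * y + c₃ * (y * z) + c₂ * (w * z)) from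
    funext fun x => by unfold latticeQuad; ring, deriv_mul_add_const]

lemma deriv_latticeQuad_thd (w x z y₀ : ℝ) :
    deriv (fun y => latticeQuad c₁ c₂ c₃ w x y z) y₀ = w + c₂ * x + c₃ * z := by
  rw [show (fun y => latticeQuad c₁ c₂ c₃ w x y z)
      = fun y => (w + c₂ * x + c₃ * z) * y + (c₁ * (w * x) + c₂ * (w * z)) from
    funext fun y => by unfold latticeQuad; ring, deriv_mul_add_const]

lemma deriv_latticeQuad_fth (w x y z₀ : ℝ) :
    deriv (fun z => latticeQuad c₁ c₂ c₃ w x y z) z₀ = c₂ * w + c₃ * y := by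
  rw [show (fun z => latticeQuad c₁ c₂ c₃ w x y z)
      = fun z => (c₂ * w + c₃ * y) * z + (w * y + c₁ * (w * x) + c₂ * (x * y)) from
    funext fun z => by unfold latticeQuad; ring, deriv_mul_add_const]

variable {c : ℝ}

lemma linearized_left_edge (hD : c₁ * c₃ - c₂ ^ 2 ≠ 0) (hc : c = c₂ / (c₁ * c₃ - c₂ ^ 2))
    {p q w x y z : ℝ} (hp : p ≠ 0) (hq : q ≠ 0)
    (h₀ : latticeQuad c₁ c₂ c₃ p w q y = 0) (h₁ : latticeQuad c₁ c₂ c₃ w x y z = 0) :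
    (x - c * w) * (w / p - c) * (y + c₁ * x + c₂ * z)
      + (z - c * y) * (y / q - c) * (w + c₂ * x + c₃ * z) = (x - c * w) * (z - c * y) := by
  set X := x - c * w
  set Z := z - c * y
  set S := X * (y + c₁ * x + c₂ * z) + Z * (w + c₂ * x + c₃ * z)
  set κ := c * S + X * Z
  have hw : w * X * (y + c₁ * x + c₂ * z) = -κ * (c₂ * w + c₃ * y) := by
    linear_combination (norm := skip) c₃ * (c₁ * X + c₂ * Z) / (c₁ * c₃ - c₂ ^ 2) * h₁
    simp only [X, Z, κ, S, latticeQuad]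
    subst hc; field_simp; ring
  have hy : y * Z * (w + c₂ * x + c₃ * z) = -κ * (c₁ * w + c₂ * y) := by
    linear_combination (norm := skip) c₁ * (c₂ * X + c₃ * Z) / (c₁ * c₃ - c₂ ^ 2) * h₁
    simp only [X, Z, κ, S, latticeQuad]
    subst hc; field_simp; ring
  have hpq : (c₂ * w + c₃ * y) / p + (c₁ * w + c₂ * y) / q = -1 := by
    unfold latticeQuad at h₀
    field_simp
    linear_combination h₀
  calc _ = w * X * (y + c₁ * x + c₂ * z) / p + y * Z * (w + c₂ * x + c₃ * z) / q - c * S := by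
        ring
    _ = -κ * ((c₂ * w + c₃ * y) / p + (c₁ * w + c₂ * y) / q) - c * S := by rw [hw, hy]; ring
    _ = X * Z := by rw [hpq]; ring

lemma linearized_right_edge (hD : c₁ * c₃ - c₂ ^ 2 ≠ 0) (hc : c = c₂ / (c₁ * c₃ - c₂ ^ 2))
    {w x x₂ y z z₂ : ℝ} (hw : w ≠ 0) (hy : y ≠ 0)
    (h₁ : latticeQuad c₁ c₂ c₃ w x y z = 0) (h₂ : latticeQuad c₁ c₂ c₃ x x₂ z z₂ = 0) :
    (x₂ - c * x) * (x / w - c) * (c₁ * w + c₂ * y)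
      + (z₂ - c * z) * (z / y - c) * (c₂ * w + c₃ * y) = -((x - c * w) * (z - c * y)) := by
  have hcD : c * (c₁ * c₃ - c₂ ^ 2) = c₂ := by rw [hc]; field_simp
  have hX : (c₁ * c₃ - c₂ ^ 2) * (x - c * w) * y = (c₂ * w + c₃ * y) * (c₁ * x + c₂ * z) := by
    unfold latticeQuad at h₁
    linear_combination (-c₂) * h₁ - w * y * hcD
  have hZ : (c₁ * c₃ - c₂ ^ 2) * (z - c * y) * w = (c₁ * w + c₂ * y) * (c₂ * x + c₃ * z) := by
    unfold latticeQuad at h₁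
    linear_combination (-c₂) * h₁ - w * y * hcD
  have h₂' : (c₁ * c₃ - c₂ ^ 2)
        * ((x₂ - c * x) * (c₁ * x + c₂ * z) + (z₂ - c * z) * (c₂ * x + c₃ * z))
      = -((c₁ * x + c₂ * z) * (c₂ * x + c₃ * z)) := by
    unfold latticeQuad at h₂
    linear_combination
      (c₁ * c₃ - c₂ ^ 2) * h₂ - (x * (c₁ * x + c₂ * z) + z * (c₂ * x + c₃ * z)) * hcD
  have h_clear : w * y * ((x₂ - c * x) * (x / w - c) * (c₁ * w + c₂ * y)
      + (z₂ - c * z) * (z / y - c) * (c₂ * w + c₃ * y))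
      = (x₂ - c * x) * (c₁ * w + c₂ * y) * ((x - c * w) * y)
        + (z₂ - c * z) * (c₂ * w + c₃ * y) * ((z - c * y) * w) := by
    field_simp
  have hwy : (c₁ * c₃ - c₂ ^ 2) ^ 2 * (w * y) ≠ 0 := by positivity
  refine mul_left_cancel₀ hwy ?_
  rw [mul_assoc, h_clear]
  linear_combination
    ((c₁ * c₃ - c₂ ^ 2) * (x₂ - c * x) * (c₁ * w + c₂ * y)
        + (c₁ * w + c₂ * y) * (c₂ * x + c₃ * z)) * hX
      + ((c₁ * c₃ - c₂ ^ 2) * (z₂ - c * z) * (c₂ * w + c₃ * y)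
        + (c₁ * c₃ - c₂ ^ 2) * (x - c * w) * y) * hZ
      + (c₁ * w + c₂ * y) * (c₂ * w + c₃ * y) * h₂'

theorem stmt_10
    (c₁ c₂ c₃ : ℝ) (h : c₁ * c₃ - c₂ ^ 2 ≠ 0) (c : ℝ) (hc : c = c₂ / (c₁ * c₃ - c₂ ^ 2))
    (E : ℝ → ℝ → ℝ → ℝ → ℝ)
    (hE : ∀ w x y z : ℝ, E w x y z = w * y + c₁ * (w * x) + c₃ * (y * z) + c₂ * (w * z + x * y))
    (u : ℤ × ℤ → ℝ)
    (hu : ∀ n m : ℤ, E (u (n, m)) (u (n + 1, m)) (u (n, m + 1)) (u (n + 1, m + 1)) = 0)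
    (hne : ∀ n m : ℤ, u (n, m) ≠ 0)
    (g : ℤ × ℤ → ℝ)
    (hg : ∀ n m : ℤ, g (n, m) = (u (n + 1, m) - c * u (n, m)) * (u (n, m) / u (n - 1, m) - c))
    (n m : ℤ) :
    g (n, m) * deriv (fun w => E w (u (n + 1, m)) (u (n, m + 1)) (u (n + 1, m + 1))) (u (n, m))
      + g (n + 1, m) * deriv (fun x => E (u (n, m)) x (u (n, m + 1)) (u (n + 1, m + 1))) (u (n + 1, m))
      + g (n, m + 1) * deriv (fun y => E (u (n, m)) (u (n + 1, m)) y (u (n + 1, m + 1))) (u (n, m + 1))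
      + g (n + 1, m + 1) * deriv (fun z => E (u (n, m)) (u (n + 1, m)) (u (n, m + 1)) z) (u (n + 1, m + 1)) = 0 := by
  obtain rfl : E = latticeQuad c₁ c₂ c₃ := by
    funext w x y z
    exact hE w x y z
  have hleft := hu (n - 1) m
  rw [sub_add_cancel] at hleft
  have hL := linearized_left_edge h hc (hne (n - 1) m) (hne (n - 1) (m + 1)) hleft (hu n m)
  have hR := linearized_right_edge h hc (hne n m) (hne n (m + 1)) (hu n m) (hu (n + 1) m)
  rw [deriv_latticeQuad_fst, deriv_latticeQuad_snd, deriv_latticeQuad_thd, deriv_latticeQuad_fth,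
    hg, hg, hg, hg, add_sub_cancel_right]
  linear_combination hL + hR
end

section
/- Let c₁, c₂, c₃ ∈ ℝ with c₁c₃ = c₂² and c₂ ≠ 0. The lattice equation with polynomial E(w,x,y,z) = wy + c₁wx + c₃yz + c₂(wz + xy), i.e. u_{n,m}u_{n,m+1} + c₁u_{n,m}u_{n+1,m} + c₃u_{n,m+1}u_{n+1,m+1} + c₂(u_{n,m}u_{n+1,m+1} + u_{n+1,m}u_{n,m+1}) = 0, admits the five-point generalized symmetry with generator g_{n,m} = u_{n+1,m} + u_{n,m}²/u_{n-1,m}: for every solution u : ℤ × ℤ → ℝ of the equation satisfying u_{n,m} ≠ 0 for all (n,m), and every (n,m) ∈ ℤ², the linearized equation g_{n,m}·∂₁E + g_{n+1,m}·∂₂E + g_{n,m+1}·∂₃E + g_{n+1,m+1}·∂₄E = 0 holds, where each ∂ᵢE is evaluated at (u_{n,m}, u_{n+1,m}, u_{n,m+1}, u_{n+1,m+1}). -/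
private lemma derivE1 (c₁ c₂ c₃ x y z t : ℝ) :
    deriv (fun w : ℝ => w * y + c₁ * (w * x) + c₃ * (y * z) + c₂ * (w * z + x * y)) t
      = y + c₁ * x + c₂ * z := by
  have h : (fun w : ℝ => w * y + c₁ * (w * x) + c₃ * (y * z) + c₂ * (w * z + x * y))
      = fun w : ℝ => w * (y + c₁ * x + c₂ * z) + (c₃ * (y * z) + c₂ * (x * y)) := by
    funext w; ring
  rw [h]
  simpa using (((hasDerivAt_id t).mul_const (y + c₁ * x + c₂ * z)).add_const
    (c₃ * (y * z) + c₂ * (x * y))).deriv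

private lemma derivE2 (c₁ c₂ c₃ w y z t : ℝ) :
    deriv (fun x : ℝ => w * y + c₁ * (w * x) + c₃ * (y * z) + c₂ * (w * z + x * y)) t
      = c₁ * w + c₂ * y := by
  have h : (fun x : ℝ => w * y + c₁ * (w * x) + c₃ * (y * z) + c₂ * (w * z + x * y))
      = fun x : ℝ => x * (c₁ * w + c₂ * y) + (w * y + c₃ * (y * z) + c₂ * (w * z)) := by
    funext x; ring
  rw [h]
  simpa using (((hasDerivAt_id t).mul_const (c₁ * w + c₂ * y)).add_const
    (w * y + c₃ * (y * z) + c₂ * (w * z))).deriv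

private lemma derivE3 (c₁ c₂ c₃ w x z t : ℝ) :
    deriv (fun y : ℝ => w * y + c₁ * (w * x) + c₃ * (y * z) + c₂ * (w * z + x * y)) t
      = w + c₃ * z + c₂ * x := by
  have h : (fun y : ℝ => w * y + c₁ * (w * x) + c₃ * (y * z) + c₂ * (w * z + x * y))
      = fun y : ℝ => y * (w + c₃ * z + c₂ * x) + (c₁ * (w * x) + c₂ * (w * z)) := by
    funext y; ring
  rw [h]
  simpa using (((hasDerivAt_id t).mul_const (w + c₃ * z + c₂ * x)).add_const
    (c₁ * (w * x) + c₂ * (w * z))).deriv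

private lemma derivE4 (c₁ c₂ c₃ w x y t : ℝ) :
    deriv (fun z : ℝ => w * y + c₁ * (w * x) + c₃ * (y * z) + c₂ * (w * z + x * y)) t
      = c₃ * y + c₂ * w := by
  have h : (fun z : ℝ => w * y + c₁ * (w * x) + c₃ * (y * z) + c₂ * (w * z + x * y))
      = fun z : ℝ => z * (c₃ * y + c₂ * w) + (w * y + c₁ * (w * x) + c₂ * (x * y)) := by
    funext z; ring
  rw [h]
  simpa using (((hasDerivAt_id t).mul_const (c₃ * y + c₂ * w)).add_const
    (w * y + c₁ * (w * x) + c₂ * (x * y))).deriv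

theorem stmt_11
    (c₁ c₂ c₃ : ℝ) (h : c₁ * c₃ = c₂ ^ 2) (h2 : c₂ ≠ 0)
    (E : ℝ → ℝ → ℝ → ℝ → ℝ)
    (hE : ∀ w x y z : ℝ, E w x y z = w * y + c₁ * (w * x) + c₃ * (y * z) + c₂ * (w * z + x * y))
    (u : ℤ × ℤ → ℝ)
    (hu : ∀ n m : ℤ, E (u (n, m)) (u (n + 1, m)) (u (n, m + 1)) (u (n + 1, m + 1)) = 0)
    (hne : ∀ n m : ℤ, u (n, m) ≠ 0)
    (g : ℤ × ℤ → ℝ)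
    (hg : ∀ n m : ℤ, g (n, m) = u (n + 1, m) + u (n, m) ^ 2 / u (n - 1, m))
    (n m : ℤ) :
    g (n, m) * deriv (fun w => E w (u (n + 1, m)) (u (n, m + 1)) (u (n + 1, m + 1))) (u (n, m))
      + g (n + 1, m) * deriv (fun x => E (u (n, m)) x (u (n, m + 1)) (u (n + 1, m + 1))) (u (n + 1, m))
      + g (n, m + 1) * deriv (fun y => E (u (n, m)) (u (n + 1, m)) y (u (n + 1, m + 1))) (u (n, m + 1))
      + g (n + 1, m + 1) * deriv (fun z => E (u (n, m)) (u (n + 1, m)) (u (n, m + 1)) z) (u (n + 1, m + 1)) = 0 := by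
  have hc1 : c₁ ≠ 0 := by
    intro h0
    apply h2
    have h3 : c₂ ^ 2 = 0 := by rw [← h, h0]; ring
    exact pow_eq_zero_iff two_ne_zero |>.mp h3
  have e1 := hu (n - 1) m
  have e2 := hu n m
  have e3 := hu (n + 1) m
  simp only [hE, show n - 1 + 1 = n from by ring, show n + 1 + 1 = n + 2 from by ring] at e1 e2 e3
  simp only [hE, derivE1, derivE2, derivE3, derivE4]
  rw [hg n m, hg (n + 1) m, hg n (m + 1), hg (n + 1) (m + 1)]
  simp only [show n + 1 + 1 = n + 2 from by ring, show n + 1 - 1 = n from by ring]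
  have ha := hne (n - 1) m
  have hb := hne n m
  have hc := hne (n + 1) m
  have hA := hne (n - 1) (m + 1)
  have hB := hne n (m + 1)
  have hC := hne (n + 1) (m + 1)
  set ua := u (n - 1, m) with hua
  set ub := u (n, m) with hub
  set uc := u (n + 1, m) with huc
  set ud := u (n + 2, m) with hud
  set uA := u (n - 1, m + 1) with huA
  set uB := u (n, m + 1) with huB
  set uC := u (n + 1, m + 1) with huC
  set uD := u (n + 2, m + 1) with huD
  have k1 : (c₁ * ua + c₂ * uA) * (c₁ * ub + c₂ * uB) = -(c₁ * (ua * uA)) := by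
    linear_combination c₁ * e1 - (uA * uB) * h
  have k2 : (c₁ * ub + c₂ * uB) * (c₁ * uc + c₂ * uC) = -(c₁ * (ub * uB)) := by
    linear_combination c₁ * e2 - (uB * uC) * h
  have hS1 : c₁ * ua + c₂ * uA ≠ 0 := by
    intro h0
    rw [h0, zero_mul] at k1
    exact mul_ne_zero hc1 (mul_ne_zero ha hA) (by linarith)
  have hS2 : c₁ * ub + c₂ * uB ≠ 0 := by
    intro h0
    rw [h0, mul_zero] at k1
    exact mul_ne_zero hc1 (mul_ne_zero ha hA) (by linarith)
  have hS3 : c₁ * uc + c₂ * uC ≠ 0 := by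
    intro h0
    rw [h0, mul_zero] at k2
    exact mul_ne_zero hc1 (mul_ne_zero hb hB) (by linarith)
  have hMM : (ub^3*uA*uB*uC*c₂ + ub^3*uA*uB^2 + ub^3*uc*uA*uB*c₁ + ua*uc^2*uA*uB^2*c₂ + ua*ub*uB^3*uC*c₃ + 2*ua*ub*uA*uB*uC^2*c₃ + ua*ub*uA*uB^2*uD*c₃ + ua*ub*ud*uA*uB^2*c₂ + ua*ub*uc*uB^3*c₂ + 2*ua*ub*uc*uA*uB*uC*c₂ + ua*ub*uc*uA*uB^2 + 2*ua*ub*uc^2*uA*uB*c₁ + ua*ub^2*uB^3 + ua*ub^2*uA*uC^2*c₂ + ua*ub^2*uA*uB*uD*c₂ + ua*ub^2*uA*uB*uC + ua*ub^2*ud*uA*uB*c₁)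
      * (c₁ * c₂ ^ 5 * ((c₁ * ua + c₂ * uA) * ((c₁ * ub + c₂ * uB) ^ 3 * (c₁ * uc + c₂ * uC)))) = 0 := by
    linear_combination (-ub^4*uA*uB^4*c₁^3*c₂^6 - ua*ub^4*uB^4*c₁^4*c₂^5) * e1 + (ub^3*uA^2*uB^3*uC*c₁^2*c₂^9 + ub^3*uA^2*uB^4*c₁^2*c₂^8 + ub^3*uc*uA^2*uB^3*c₁^3*c₂^8 + 2*ub^4*uA^2*uB^2*uC*c₁^3*c₂^8 + ub^4*uA^2*uB^3*c₁^3*c₂^7 + 2*ub^4*uc*uA^2*uB^2*c₁^4*c₂^7 + ub^5*uA^2*uB*uC*c₁^4*c₂^7 + ub^5*uc*uA^2*uB*c₁^5*c₂^6 + ua*uc^2*uA^2*uB^4*c₁^2*c₂^9 + ua*ub*uA*uB^5*uC*c₁*c₂^10 + 2*ua*ub*uA^2*uB^3*uC^2*c₁*c₂^10 + ua*ub*uc*uA*uB^5*c₁^2*c₂^9 + 2*ua*ub*uc*uA^2*uB^3*uC*c₁^2*c₂^9 + 4*ua*ub*uc^2*uA^2*uB^3*c₁^3*c₂^8 + 2*ua*ub^2*uA*uB^4*uC*c₁^2*c₂^9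 + 5*ua*ub^2*uA^2*uB^2*uC^2*c₁^2*c₂^9 - ua*ub^2*uA^2*uB^3*uC*c₁^2*c₂^8 + 2*ua*ub^2*uc*uA*uB^4*c₁^3*c₂^8 + 4*ua*ub^2*uc*uA^2*uB^2*uC*c₁^3*c₂^8 - ua*ub^2*uc*uA^2*uB^3*c₁^3*c₂^7 + 5*ua*ub^2*uc^2*uA^2*uB^2*c₁^4*c₂^7 + 2*ua*ub^3*uA*uB^3*uC*c₁^3*c₂^8 + 2*ua*ub^3*uA*uB^4*c₁^3*c₂^7 + 4*ua*ub^3*uA^2*uB*uC^2*c₁^3*c₂^8 - ua*ub^3*uA^2*uB^2*uC*c₁^3*c₂^7 + ua*ub^3*uA^2*uB^3*c₁^3*c₂^6 + 2*ua*ub^3*uc*uA*uB^3*c₁^4*c₂^7 + 2*ua*ub^3*uc*uA^2*uB*uC*c₁^4*c₂^7 - ua*ub^3*uc*uA^2*uB^2*c₁^4*c₂^6 + 2*ua*ub^3*uc^2*uA^2*uB*c₁^5*c₂^6 + 2*ua*ub^4*uA*uB^2*uC*c₁^4*c₂^7 + 2*ua*ub^4*uA*uB^3*c₁^4*c₂^6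 + ua*ub^4*uA^2*uC^2*c₁^4*c₂^7 + 2*ua*ub^4*uc*uA*uB^2*c₁^5*c₂^6 + ua*ub^5*uA*uB*uC*c₁^5*c₂^6 + ua*ub^5*uc*uA*uB*c₁^6*c₂^5 + ua^2*uc^2*uA*uB^4*c₁^3*c₂^8 + ua^2*ub*uB^5*uC*c₁^2*c₂^9 + 2*ua^2*ub*uA*uB^3*uC^2*c₁^2*c₂^9 + ua^2*ub*uc*uB^5*c₁^3*c₂^8 + 2*ua^2*ub*uc*uA*uB^3*uC*c₁^3*c₂^8 + 4*ua^2*ub*uc^2*uA*uB^3*c₁^4*c₂^7 + 2*ua^2*ub^2*uB^4*uC*c₁^3*c₂^8 + 5*ua^2*ub^2*uA*uB^2*uC^2*c₁^3*c₂^8 - ua^2*ub^2*uA*uB^3*uC*c₁^3*c₂^7 + 2*ua^2*ub^2*uc*uB^4*c₁^4*c₂^7 + 4*ua^2*ub^2*uc*uA*uB^2*uC*c₁^4*c₂^7 - ua^2*ub^2*uc*uA*uB^3*c₁^4*c₂^6 + 5*ua^2*ub^2*uc^2*uA*uB^2*c₁^5*c₂^6 + ua^2*ub^3*uB^3*uC*c₁^4*c₂^7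 + ua^2*ub^3*uB^4*c₁^4*c₂^6 + 4*ua^2*ub^3*uA*uB*uC^2*c₁^4*c₂^7 - ua^2*ub^3*uA*uB^2*uC*c₁^4*c₂^6 + ua^2*ub^3*uA*uB^3*c₁^4*c₂^5 + ua^2*ub^3*uc*uB^3*c₁^5*c₂^6 + 2*ua^2*ub^3*uc*uA*uB*uC*c₁^5*c₂^6 - ua^2*ub^3*uc*uA*uB^2*c₁^5*c₂^5 + 2*ua^2*ub^3*uc^2*uA*uB*c₁^6*c₂^5 + ua^2*ub^4*uB^3*c₁^5*c₂^5 + ua^2*ub^4*uA*uC^2*c₁^5*c₂^6) * e2 + (ua*ub*uA^2*uB^5*c₁*c₂^10 + 4*ua*ub^2*uA^2*uB^4*c₁^2*c₂^9 + 6*ua*ub^3*uA^2*uB^3*c₁^3*c₂^8 + 4*ua*ub^4*uA^2*uB^2*c₁^4*c₂^7 + ua*ub^5*uA^2*uB*c₁^5*c₂^6 + ua^2*ub*uA*uB^5*c₁^2*c₂^9 + 4*ua^2*ub^2*uA*uB^4*c₁^3*c₂^8 + 6*ua^2*ub^3*uA*uB^3*c₁^4*c₂^7 + 4*ua^2*ub^4*uA*uB^2*c₁^5*c₂^6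 + ua^2*ub^5*uA*uB*c₁^6*c₂^5) * e3 + (-ub^3*uA^2*uB^4*uC^2*c₁*c₂^9 - ub^3*uA^2*uB^5*uC*c₁*c₂^8 - ub^3*uc*uA^2*uB^4*uC*c₁^2*c₂^8 - 2*ub^4*uA^2*uB^3*uC^2*c₁^2*c₂^8 - ub^4*uA^2*uB^4*uC*c₁^2*c₂^7 + ub^4*uA^2*uB^5*c₁^2*c₂^6 - 2*ub^4*uc*uA^2*uB^3*uC*c₁^3*c₂^7 - ub^5*uA^2*uB^2*uC^2*c₁^3*c₂^7 - ub^5*uc*uA^2*uB^2*uC*c₁^4*c₂^6 - ua*uc^2*uA^2*uB^5*uC*c₁*c₂^9 + ua*ub*uc*uA^2*uB^5*uD*c₁*c₂^9 - 4*ua*ub*uc^2*uA^2*uB^4*uC*c₁^2*c₂^8 + ua*ub^2*uA*uB^5*uC^2*c₁*c₂^9 + ua*ub^2*uA^2*uB^3*uC^3*c₁*c₂^9 - ua*ub^2*uA^2*uB^4*uC*uD*c₁*c₂^9 + ua*ub^2*uA^2*uB^4*uC^2*c₁*c₂^8 + ua*ub^2*uc*uA*uB^5*uC*c₁^2*c₂^8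 + 2*ua*ub^2*uc*uA^2*uB^3*uC^2*c₁^2*c₂^8 + 3*ua*ub^2*uc*uA^2*uB^4*uD*c₁^2*c₂^8 + ua*ub^2*uc*uA^2*uB^4*uC*c₁^2*c₂^7 - 5*ua*ub^2*uc^2*uA^2*uB^3*uC*c₁^3*c₂^7 + ua*ub^3*uA*uB^4*uC^2*c₁^2*c₂^8 - 2*ua*ub^3*uA*uB^5*uC*c₁^2*c₂^7 + 2*ua*ub^3*uA^2*uB^2*uC^3*c₁^2*c₂^8 - 3*ua*ub^3*uA^2*uB^3*uC*uD*c₁^2*c₂^8 + ua*ub^3*uA^2*uB^3*uC^2*c₁^2*c₂^7 - ua*ub^3*uA^2*uB^4*uC*c₁^2*c₂^6 + ua*ub^3*uc*uA*uB^4*uC*c₁^3*c₂^7 + 4*ua*ub^3*uc*uA^2*uB^2*uC^2*c₁^3*c₂^7 + 3*ua*ub^3*uc*uA^2*uB^3*uD*c₁^3*c₂^7 + ua*ub^3*uc*uA^2*uB^3*uC*c₁^3*c₂^6 - 2*ua*ub^3*uc^2*uA^2*uB^2*uC*c₁^4*c₂^6 - ua*ub^4*uA*uB^3*uC^2*c₁^3*c₂^7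 - 2*ua*ub^4*uA*uB^4*uC*c₁^3*c₂^6 + ua*ub^4*uA*uB^5*c₁^3*c₂^5 + ua*ub^4*uA^2*uB*uC^3*c₁^3*c₂^7 - 3*ua*ub^4*uA^2*uB^2*uC*uD*c₁^3*c₂^7 - ua*ub^4*uc*uA*uB^3*uC*c₁^4*c₂^6 + 2*ua*ub^4*uc*uA^2*uB*uC^2*c₁^4*c₂^6 + ua*ub^4*uc*uA^2*uB^2*uD*c₁^4*c₂^6 - ua*ub^5*uA*uB^2*uC^2*c₁^4*c₂^6 - ua*ub^5*uA^2*uB*uC*uD*c₁^4*c₂^6 - ua*ub^5*uc*uA*uB^2*uC*c₁^5*c₂^5 - ua^2*uc^2*uA*uB^5*uC*c₁^2*c₂^8 + ua^2*ub*uc*uA*uB^5*uD*c₁^2*c₂^8 - 4*ua^2*ub*uc^2*uA*uB^4*uC*c₁^3*c₂^7 + ua^2*ub^2*uB^5*uC^2*c₁^2*c₂^8 + ua^2*ub^2*uA*uB^3*uC^3*c₁^2*c₂^8 - ua^2*ub^2*uA*uB^4*uC*uD*c₁^2*c₂^8 + ua^2*ub^2*uA*uB^4*uC^2*c₁^2*c₂^7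 + ua^2*ub^2*uc*uB^5*uC*c₁^3*c₂^7 + 2*ua^2*ub^2*uc*uA*uB^3*uC^2*c₁^3*c₂^7 + 3*ua^2*ub^2*uc*uA*uB^4*uD*c₁^3*c₂^7 + ua^2*ub^2*uc*uA*uB^4*uC*c₁^3*c₂^6 - 5*ua^2*ub^2*uc^2*uA*uB^3*uC*c₁^4*c₂^6 + 2*ua^2*ub^3*uB^4*uC^2*c₁^3*c₂^7 - ua^2*ub^3*uB^5*uC*c₁^3*c₂^6 + 2*ua^2*ub^3*uA*uB^2*uC^3*c₁^3*c₂^7 - 3*ua^2*ub^3*uA*uB^3*uC*uD*c₁^3*c₂^7 + ua^2*ub^3*uA*uB^3*uC^2*c₁^3*c₂^6 - ua^2*ub^3*uA*uB^4*uC*c₁^3*c₂^5 + 2*ua^2*ub^3*uc*uB^4*uC*c₁^4*c₂^6 + 4*ua^2*ub^3*uc*uA*uB^2*uC^2*c₁^4*c₂^6 + 3*ua^2*ub^3*uc*uA*uB^3*uD*c₁^4*c₂^6 + ua^2*ub^3*uc*uA*uB^3*uC*c₁^4*c₂^5 - 2*ua^2*ub^3*uc^2*uA*uB^2*uC*c₁^5*c₂^5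 + ua^2*ub^4*uB^3*uC^2*c₁^4*c₂^6 - ua^2*ub^4*uB^4*uC*c₁^4*c₂^5 + ua^2*ub^4*uA*uB*uC^3*c₁^4*c₂^6 - 3*ua^2*ub^4*uA*uB^2*uC*uD*c₁^4*c₂^6 + ua^2*ub^4*uc*uB^3*uC*c₁^5*c₂^5 + 2*ua^2*ub^4*uc*uA*uB*uC^2*c₁^5*c₂^5 + ua^2*ub^4*uc*uA*uB^2*uD*c₁^5*c₂^5 - ua^2*ub^5*uA*uB*uC*uD*c₁^5*c₂^5) * h
  have hM : (ub^3*uA*uB*uC*c₂ + ub^3*uA*uB^2 + ub^3*uc*uA*uB*c₁ + ua*uc^2*uA*uB^2*c₂ + ua*ub*uB^3*uC*c₃ + 2*ua*ub*uA*uB*uC^2*c₃ + ua*ub*uA*uB^2*uD*c₃ + ua*ub*ud*uA*uB^2*c₂ + ua*ub*uc*uB^3*c₂ + 2*ua*ub*uc*uA*uB*uC*c₂ + ua*ub*uc*uA*uB^2 + 2*ua*ub*uc^2*uA*uB*c₁ + ua*ub^2*uB^3 + ua*ub^2*uA*uC^2*c₂ + ua*ub^2*uA*uB*uD*c₂ +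 ua*ub^2*uA*uB*uC + ua*ub^2*ud*uA*uB*c₁) = 0 := by
    rcases mul_eq_zero.mp hMM with hq | hq
    · exact hq
    · exact absurd hq (mul_ne_zero (mul_ne_zero hc1 (pow_ne_zero 5 h2))
        (mul_ne_zero hS1 (mul_ne_zero (pow_ne_zero 3 hS2) hS3)))
  have hden : ua * (ub * (uA * uB)) ≠ 0 := mul_ne_zero ha (mul_ne_zero hb (mul_ne_zero hA hB))
  apply mul_right_cancel₀ hden
  rw [zero_mul, ← hM]
  field_simp
  ring
end

section
/- Let c₂, c₃ ∈ ℝ with c₂c₃ ≠ 0 and c₁ = 0. The lattice equation with polynomial E(w,x,y,z) = wy + c₃yz + c₂(wz + xy), i.e. u_{n,m}u_{n,m+1} + c₃u_{n,m+1}u_{n+1,m+1} + c₂(u_{n,m}u_{n+1,m+1} + u_{n+1,m}u_{n,m+1}) = 0, admits the five-point generalized symmetry with generator g_{n,m} = (u_{n,m}/u_{n,m+1} + c₃/c₂)(u_{n,m-1} + u_{n,m}·c₃/c₂): for every solution u : ℤ × ℤ → ℝ of the equation satisfying u_{n,m} ≠ 0 for all (n,m), and every (n,m) ∈ ℤ²,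 the linearized equation g_{n,m}·∂₁E + g_{n+1,m}·∂₂E + g_{n,m+1}·∂₃E + g_{n+1,m+1}·∂₄E = 0 holds, where each ∂ᵢE is evaluated at (u_{n,m}, u_{n+1,m}, u_{n,m+1}, u_{n+1,m+1}). -/
/-!
The partial derivatives of `E` are linear in the lattice values and the generator has the
denominators `u(n,m+1)`, `u(n+1,m+1)`, `u(n,m+2)`, `u(n+1,m+2)`. After clearing them, the
linearized equation at `(n,m)` is a polynomial combination of the quad equation at the three
squares `(n,m-1)`, `(n,m)`, `(n,m+1)` that the five-point stencil of the generator touches.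
-/

theorem linearization_eq {c₂ c₃ : ℝ} {E : ℝ → ℝ → ℝ → ℝ → ℝ}
    (hE : ∀ w x y z : ℝ, E w x y z = w * y + c₃ * (y * z) + c₂ * (w * z + x * y))
    (G₀ G₁ G₂ G₃ w x y z : ℝ) :
    G₀ * deriv (fun w => E w x y z) w + G₁ * deriv (fun x => E w x y z) x
      + G₂ * deriv (fun y => E w x y z) y + G₃ * deriv (fun z => E w x y z) z
      = G₀ * (y + c₂ * z) + G₁ * (c₂ * y) + G₂ * (w + c₃ * z + c₂ * x)
        + G₃ * (c₃ * y + c₂ * w) := by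
  simp (disch := fun_prop) [hE, deriv_fun_add]

/-- Here `a, p, r, t` stand for `u(n, m-1), …, u(n, m+2)` and `b, q, s, v` for the same rows of
column `n+1`. -/
theorem linearized_quad_eq_zero {c₂ c₃ a b p q r s t v : ℝ} (hc₂ : c₂ ≠ 0)
    (hr : r ≠ 0) (hs : s ≠ 0) (ht : t ≠ 0) (hv : v ≠ 0)
    (hlow : a * p + c₃ * (p * q) + c₂ * (a * q + b * p) = 0)
    (hmid : p * r + c₃ * (r * s) + c₂ * (p * s + q * r) = 0)
    (hup : r * t + c₃ * (t * v) + c₂ * (r * v + s * t) = 0) :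
    (p / r + c₃ / c₂) * (a + p * (c₃ / c₂)) * (r + c₂ * s)
      + (q / s + c₃ / c₂) * (b + q * (c₃ / c₂)) * (c₂ * r)
      + (r / t + c₃ / c₂) * (p + r * (c₃ / c₂)) * (p + c₃ * s + c₂ * q)
      + (s / v + c₃ / c₂) * (q + s * (c₃ / c₂)) * (c₃ * r + c₂ * p) = 0 := by
  field_simp
  linear_combination -c₂ * r * t * v * (r + c₂ * s) * hlow
    + (c₂ * t * v * (a * (r + c₂ * s) + c₂ * b * r) + c₂ * s * (c₂ * p + c₃ * r) * (r * v + s * t)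
        + c₃ * t * v * (2 * c₂ * p * s + c₂ * q * r + 2 * c₃ * r * s)) * hmid
    - c₂ * p * s^2 * (c₃ * r + c₂ * p) * hup

theorem stmt_14
    (c₂ c₃ : ℝ) (h : c₂ * c₃ ≠ 0)
    (E : ℝ → ℝ → ℝ → ℝ → ℝ)
    (hE : ∀ w x y z : ℝ, E w x y z = w * y + c₃ * (y * z) + c₂ * (w * z + x * y))
    (u : ℤ × ℤ → ℝ)
    (hu : ∀ n m : ℤ, E (u (n, m)) (u (n + 1, m)) (u (n, m + 1)) (u (n + 1, m + 1)) = 0)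
    (hne : ∀ n m : ℤ, u (n, m) ≠ 0)
    (g : ℤ × ℤ → ℝ)
    (hg : ∀ n m : ℤ, g (n, m) = (u (n, m) / u (n, m + 1) + c₃ / c₂) * (u (n, m - 1) + u (n, m) * (c₃ / c₂)))
    (n m : ℤ) :
    g (n, m) * deriv (fun w => E w (u (n + 1, m)) (u (n, m + 1)) (u (n + 1, m + 1))) (u (n, m))
      + g (n + 1, m) * deriv (fun x => E (u (n, m)) x (u (n, m + 1)) (u (n + 1, m + 1))) (u (n + 1, m))
      + g (n, m + 1) * deriv (fun y => E (u (n, m)) (u (n + 1, m)) y (u (n + 1, m + 1))) (u (n, m + 1))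
      + g (n + 1, m + 1) * deriv (fun z => E (u (n, m)) (u (n + 1, m)) (u (n, m + 1)) z) (u (n + 1, m + 1)) = 0 := by
  have hquad (k l : ℤ) := (hE _ _ _ _).symm.trans (hu k l)
  have hlow := hquad n (m - 1)
  rw [sub_add_cancel] at hlow
  rw [linearization_eq hE, hg n m, hg (n + 1) m, hg n (m + 1), hg (n + 1) (m + 1)]
  simp only [add_sub_cancel_right]
  exact linearized_quad_eq_zero (left_ne_zero_of_mul h) (hne _ _) (hne _ _) (hne _ _) (hne _ _)
    hlow (hquad n m) (hquad n (m + 1))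
end

section
/- Let β, b ∈ ℂ with β ≠ 0 and b² = β. If u : ℤ × ℤ → ℂ is a solution of the equation (1 + u_{n,m}u_{n+1,m})((1/2)u_{n+1,m+1} + u_{n,m+1}) = (1 + u_{n,m+1}u_{n+1,m+1})((1/2)u_{n,m} + u_{n+1,m}) for all (n,m) ∈ ℤ², then the map û defined by û_{n,m} = (-1)^m · b · u_{n,m} satisfies, for all (n,m) ∈ ℤ², the equation (û_{n,m}û_{n+1,m+1} + 2β)(û_{n+1,m} + û_{n,m+1}) + (2û_{n+1,m}û_{n,m+1} + β)(û_{n,m} + û_{n+1,m+1}) = 0, i.e. the equation (u₀,₀u₁,₁ + α)(u₁,₀ + u₀,₁) + (2u₁,₀u₀,₁ + β)(u₀,₀ + u₁,₁) + δ = 0 with α = 2β and δ = 0. -/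
theorem stmt_15 (β b : ℂ) (hβ : β ≠ 0) (hb : b ^ 2 = β)
    (u : ℤ × ℤ → ℂ)
    (hu : ∀ n m : ℤ,
      (1 + u (n, m) * u (n + 1, m)) * ((1 / 2) * u (n + 1, m + 1) + u (n, m + 1))
        = (1 + u (n, m + 1) * u (n + 1, m + 1)) * ((1 / 2) * u (n, m) + u (n + 1, m)))
    (v : ℤ × ℤ → ℂ)
    (hv : ∀ n m : ℤ, v (n, m) = (-1 : ℂ) ^ m * b * u (n, m)) :
    ∀ n m : ℤ,
      (v (n, m) * v (n + 1, m + 1) + 2 * β) * (v (n + 1, m) + v (n, m + 1))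
        + (2 * (v (n + 1, m) * v (n, m + 1)) + β) * (v (n, m) + v (n + 1, m + 1)) = 0 := by
  subst hb
  intro n m
  have hs : ((-1 : ℂ)) ^ (m + 1) = -((-1 : ℂ) ^ m) := by
    rw [zpow_add_one₀ (by norm_num : (-1:ℂ) ≠ 0)]; ring
  have hsq : ((-1 : ℂ) ^ m) ^ 2 = 1 := by
    rw [← zpow_natCast, ← zpow_mul, mul_comm, zpow_mul]
    norm_num
  rw [hv n m, hv (n+1) m, hv n (m+1), hv (n+1) (m+1), hs]
  linear_combination (-2 * (-1:ℂ)^m * b * b^2 * ((-1:ℂ)^m)^2) * hu n m +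
    (-1 * b^3 * (-1:ℂ)^m * (u (n,m) - u (n+1,m+1) + 2*u (n+1,m) - 2*u (n,m+1))) * hsq
end

section
/- Let û : ℤ × ℤ → ℝ satisfy û_{n,m} ≠ 1 for all (n,m), and define u_{n,m} = 2/(1 - û_{n,m}). Then for every (n,m) ∈ ℤ²: u_{n+1,m+1}·u_{n,m+1}·(u_{n+1,m} - 1) = u_{n,m}·u_{n+1,m}·(u_{n,m+1} - 1) holds if and only if (û_{n+1,m} + 1)(û_{n,m} - 1) = (û_{n+1,m+1} - 1)(û_{n,m+1} + 1) holds. In other words, the Möbius point transformation u = 2/(1 - û) maps solutions of the equation u₁,₁(u₀,₁ + c)(u₁,₀ - 1) = u₀,₀(u₁,₀ + c)(u₀,₁ - 1) with c = 0 exactly to solutions of the equation (u₁,₀ + 1)(u₀,₀ - 1) = (u₁,₁ - 1)(u₀,₁ + 1). -/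
/-! Writing `u = 2 / (1 - v)` one has `u - 1 = (1 + v) / (1 - v)`, so after clearing the
nonzero denominators `1 - v` and the common factor `4`, both sides of the quad equation in `u`
collapse to the bilinear relation in `v`. -/

lemma two_div_one_sub_sub_one {K : Type*} [Field K] {v : K} (hv : v ≠ 1) :
    2 / (1 - v) - 1 = (1 + v) / (1 - v) := by
  rw [div_sub_one (sub_ne_zero.mpr hv.symm)]
  ring_nf

lemma mobius_quad_equation_iff {K : Type*} [Field K] [NeZero (2 : K)] {a b c d : K}
    (ha : a ≠ 1) (hb : b ≠ 1) (hc : c ≠ 1) (hd : d ≠ 1) :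
    2 / (1 - d) * (2 / (1 - c)) * (2 / (1 - b) - 1)
        = 2 / (1 - a) * (2 / (1 - b)) * (2 / (1 - c) - 1)
      ↔ (b + 1) * (a - 1) = (d - 1) * (c + 1) := by
  have := sub_ne_zero.mpr ha.symm
  have := sub_ne_zero.mpr hb.symm
  have := sub_ne_zero.mpr hc.symm
  have := sub_ne_zero.mpr hd.symm
  rw [two_div_one_sub_sub_one hb, two_div_one_sub_sub_one hc]
  field_simp
  constructor <;> intro h <;> linear_combination -h

theorem stmt_18 (v : ℤ × ℤ → ℝ) (hv1 : ∀ n m : ℤ, v (n, m) ≠ 1)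
    (u : ℤ × ℤ → ℝ) (hu : ∀ n m : ℤ, u (n, m) = 2 / (1 - v (n, m))) :
    ∀ n m : ℤ,
      (u (n + 1, m + 1) * u (n, m + 1) * (u (n + 1, m) - 1)
        = u (n, m) * u (n + 1, m) * (u (n, m + 1) - 1))
      ↔ ((v (n + 1, m) + 1) * (v (n, m) - 1) = (v (n + 1, m + 1) - 1) * (v (n, m + 1) + 1)) := by
  intro n m
  simp only [hu]
  exact mobius_quad_equation_iff (hv1 _ _) (hv1 _ _) (hv1 _ _) (hv1 _ _)
end

section
/- Let k₂, k₁₂ ∈ ℝ. For every map û : ℤ × ℤ → ℝ define u_{n,m} = (-1)^m û_{n,m}. Then for all (n,m) ∈ ℤ² the exact identity holds: (u_{n+1,m}u_{n,m+1}u_{n+1,m+1} + u_{n,m}u_{n,m+1}u_{n+1,m+1} - u_{n,m}u_{n+1,m}u_{n+1,m+1} - u_{n,m}u_{n+1,m}u_{n,m+1})k₂ + (u_{n,m} + u_{n+1,m} - u_{n,m+1} - u_{n+1,m+1})k₁₂ = (-1)^m·[(û_{n+1,m}û_{n,m+1}û_{n+1,m+1} + û_{n,m}û_{n,m+1}û_{n+1,m+1}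 + û_{n,m}û_{n+1,m}û_{n+1,m+1} + û_{n,m}û_{n+1,m}û_{n,m+1})k₂ + (û_{n,m} + û_{n+1,m} + û_{n,m+1} + û_{n+1,m+1})k₁₂]. In particular, the lattice-dependent point transformation u_{n,m} = (-1)^m û_{n,m} maps solutions of the anti-symmetric Klein type equation (with k₆ = 0) exactly to solutions of the Q_V-type equation (u₁,₀u₀,₁u₁,₁ + u₀,₀u₀,₁u₁,₁ + u₀,₀u₁,₀u₁,₁ + u₀,₀u₁,₀u₀,₁)k₂ + (u₀,₀ + u₁,₀ + u₀,₁ + u₁,₁)k₁₂ = 0. -/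
theorem stmt_19 (k₂ k₁₂ : ℝ) (v : ℤ × ℤ → ℝ) (u : ℤ × ℤ → ℝ)
    (hu : ∀ n m : ℤ, u (n, m) = (-1 : ℝ) ^ m * v (n, m)) :
    (∀ n m : ℤ,
      (u (n + 1, m) * u (n, m + 1) * u (n + 1, m + 1)
        + u (n, m) * u (n, m + 1) * u (n + 1, m + 1)
        - u (n, m) * u (n + 1, m) * u (n + 1, m + 1)
        - u (n, m) * u (n + 1, m) * u (n, m + 1)) * k₂
      + (u (n, m) + u (n + 1, m) - u (n, m + 1) - u (n + 1, m + 1)) * k₁₂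
      = (-1 : ℝ) ^ m *
        ((v (n + 1, m) * v (n, m + 1) * v (n + 1, m + 1)
          + v (n, m) * v (n, m + 1) * v (n + 1, m + 1)
          + v (n, m) * v (n + 1, m) * v (n + 1, m + 1)
          + v (n, m) * v (n + 1, m) * v (n, m + 1)) * k₂
        + (v (n, m) + v (n + 1, m) + v (n, m + 1) + v (n + 1, m + 1)) * k₁₂))
    ∧ ((∀ n m : ℤ,
        (u (n + 1, m) * u (n, m + 1) * u (n + 1, m + 1)
          + u (n, m) * u (n, m + 1) * u (n + 1, m + 1)
          - u (n, m) * u (n + 1, m) * u (n + 1, m + 1)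
          - u (n, m) * u (n + 1, m) * u (n, m + 1)) * k₂
        + (u (n, m) + u (n + 1, m) - u (n, m + 1) - u (n + 1, m + 1)) * k₁₂ = 0)
      ↔ (∀ n m : ℤ,
        (v (n + 1, m) * v (n, m + 1) * v (n + 1, m + 1)
          + v (n, m) * v (n, m + 1) * v (n + 1, m + 1)
          + v (n, m) * v (n + 1, m) * v (n + 1, m + 1)
          + v (n, m) * v (n + 1, m) * v (n, m + 1)) * k₂
        + (v (n, m) + v (n + 1, m) + v (n, m + 1) + v (n + 1, m + 1)) * k₁₂ = 0)) := by

  have key : ∀ n m : ℤ,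
      (u (n + 1, m) * u (n, m + 1) * u (n + 1, m + 1)
        + u (n, m) * u (n, m + 1) * u (n + 1, m + 1)
        - u (n, m) * u (n + 1, m) * u (n + 1, m + 1)
        - u (n, m) * u (n + 1, m) * u (n, m + 1)) * k₂
      + (u (n, m) + u (n + 1, m) - u (n, m + 1) - u (n + 1, m + 1)) * k₁₂
      = (-1 : ℝ) ^ m *
        ((v (n + 1, m) * v (n, m + 1) * v (n + 1, m + 1)
          + v (n, m) * v (n, m + 1) * v (n + 1, m + 1)
          + v (n, m) * v (n + 1, m) * v (n + 1, m + 1)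
          + v (n, m) * v (n + 1, m) * v (n, m + 1)) * k₂
        + (v (n, m) + v (n + 1, m) + v (n, m + 1) + v (n + 1, m + 1)) * k₁₂) := by
    intro n m
    have hpm : ((-1 : ℝ)) ^ (m + 1) = -((-1 : ℝ) ^ m) := by
      rw [zpow_add_one₀ (by norm_num)]; ring
    have hc : ((-1 : ℝ)) ^ m * ((-1 : ℝ)) ^ m = 1 := by
      rw [← zpow_add₀ (by norm_num : (-1:ℝ) ≠ 0)]
      have h2 : m + m = 2 * m := by ring
      rw [h2, zpow_mul]; norm_num
    have hcases : ((-1 : ℝ)) ^ m = 1 ∨ ((-1 : ℝ)) ^ m = -1 :=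
      mul_self_eq_one_iff.mp hc
    rw [hu n m, hu (n + 1) m, hu n (m + 1), hu (n + 1) (m + 1), hpm]
    rcases hcases with h | h <;> rw [h] <;> ring
  refine ⟨key, ?_⟩
  constructor
  · intro h n m
    have h0 := h n m
    rw [key n m] at h0
    rcases mul_eq_zero.mp h0 with h1 | h1
    · exact absurd h1 (by positivity)
    · exact h1
  · intro h n m
    rw [key n m, h n m, mul_zero]
end
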